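/- arXiv:1202.1001 — 9 statements merged into one kernel-verified Lean document; each statement's English description precedes it below -/
import Mathlib

section
/- Let u : ℝ → ℝ be twice continuously differentiable with u''(y) = y·u(y) for all y ≥ 0, u(y) > 0 for all y ≥ 0, and u(y) → 0 as y → ∞. Then for every μ ≥ 0 and every x ≥ 0 one has μ·u(μ² + x) + u'(μ² + x) < 0; consequently the function x ↦ e^{μx}·u(μ² + x) is strictly decreasing on [0, ∞). -/
open Real Filter Set

/-!
Write `v = u'` and `w = v² - y u²`. Since `v' = y u ≥ 0`, `v` is nondecreasing, so `v ≥ 0` at one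
point would make `u` nondecreasing from there on, against `u → 0`; hence `v < 0`. Along solutions
`w' = -u² < 0`. If `w` ever became negative, then `y u² ≥ -w(y₀) > 0` beyond some `y₀`, and since
`u` is decreasing, `v' = y u` is bounded below by a positive constant there, so `v` would become
positive. Hence `v² > y u² ≥ μ² u²` for `y ≥ μ²`, i.e. `μ u + v < 0`, which is (up to the factor
`exp (μ x)`) the derivative of `x ↦ exp (μ x) u (μ² + x)`.
-/

section Ici

variable {f f' : ℝ → ℝ} {a : ℝ}

lemma continuousOn_Ici_of_hasDerivAt (hf : ∀ y ≥ a, HasDerivAt f (f' y) y) :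
    ContinuousOn f (Ici a) :=
  fun y hy => (hf y hy).continuousAt.continuousWithinAt

lemma hasDerivWithinAt_interior_Ici (hf : ∀ y ≥ a, HasDerivAt f (f' y) y) :
    ∀ y ∈ interior (Ici a), HasDerivWithinAt f (f' y) (interior (Ici a)) y := by
  intro y hy
  rw [interior_Ici] at hy ⊢
  exact (hf y (le_of_lt hy)).hasDerivWithinAt

lemma monotoneOn_Ici_of_hasDerivAt_nonneg (hf : ∀ y ≥ a, HasDerivAt f (f' y) y)
    (hf' : ∀ y > a, 0 ≤ f' y) : MonotoneOn f (Ici a) :=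
  monotoneOn_of_hasDerivWithinAt_nonneg (convex_Ici a) (continuousOn_Ici_of_hasDerivAt hf)
    (hasDerivWithinAt_interior_Ici hf) fun y hy => hf' y (by rwa [interior_Ici] at hy)

lemma strictAntiOn_Ici_of_hasDerivAt_neg (hf : ∀ y ≥ a, HasDerivAt f (f' y) y)
    (hf' : ∀ y > a, f' y < 0) : StrictAntiOn f (Ici a) :=
  strictAntiOn_of_hasDerivWithinAt_neg (convex_Ici a) (continuousOn_Ici_of_hasDerivAt hf)
    (hasDerivWithinAt_interior_Ici hf) fun y hy => hf' y (by rwa [interior_Ici] at hy)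

lemma mul_sub_le_sub_of_hasDerivAt_ge {C : ℝ} (hf : ∀ y ≥ a, HasDerivAt f (f' y) y)
    (hf' : ∀ y > a, C ≤ f' y) {x : ℝ} (hx : a ≤ x) : C * (x - a) ≤ f x - f a := by
  refine (convex_Ici a).mul_sub_le_image_sub_of_le_deriv (continuousOn_Ici_of_hasDerivAt hf)
    ?_ ?_ a self_mem_Ici x hx hx
  · exact fun y hy => (hasDerivWithinAt_interior_Ici hf y hy).differentiableWithinAt
  · intro y hy
    rw [interior_Ici] at hy
    rw [(hf y (le_of_lt hy)).deriv]
    exact hf' y hy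

end Ici

lemma deriv_neg_of_monotoneOn_of_tendsto_zero {u v : ℝ → ℝ} {a : ℝ}
    (hu : ∀ y ≥ a, HasDerivAt u (v y) y) (hv : MonotoneOn v (Ici a))
    (hpos : ∀ y ≥ a, 0 < u y) (hlim : Tendsto u atTop (nhds 0)) {y₀ : ℝ} (hy₀ : a ≤ y₀) :
    v y₀ < 0 := by
  by_contra! hv₀
  have hmono : MonotoneOn u (Ici y₀) :=
    monotoneOn_Ici_of_hasDerivAt_nonneg (fun y hy => hu y (hy₀.trans hy))
      fun y hy => hv₀.trans (hv (mem_Ici.2 hy₀) (mem_Ici.2 (hy₀.trans hy.le)) hy.le)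
  obtain ⟨y, hy_lt, hy_ge⟩ :=
    ((hlim.eventually_lt_const (hpos y₀ hy₀)).and (eventually_ge_atTop y₀)).exists
  exact (hmono self_mem_Ici hy_ge hy_ge).not_gt hy_lt

def airyEnergy (u v : ℝ → ℝ) (y : ℝ) : ℝ := v y ^ 2 - y * u y ^ 2

section Airy

variable {u v : ℝ → ℝ}

lemma airy_deriv_neg (hu : ∀ y ≥ (0 : ℝ), HasDerivAt u (v y) y)
    (hv : ∀ y ≥ (0 : ℝ), HasDerivAt v (y * u y) y) (hpos : ∀ y ≥ (0 : ℝ), 0 < u y)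
    (hlim : Tendsto u atTop (nhds 0)) {y : ℝ} (hy : 0 ≤ y) : v y < 0 :=
  deriv_neg_of_monotoneOn_of_tendsto_zero hu
    (monotoneOn_Ici_of_hasDerivAt_nonneg hv fun y hy => mul_nonneg hy.le (hpos y hy.le).le)
    hpos hlim hy

lemma airy_strictAntiOn (hu : ∀ y ≥ (0 : ℝ), HasDerivAt u (v y) y)
    (hv : ∀ y ≥ (0 : ℝ), HasDerivAt v (y * u y) y) (hpos : ∀ y ≥ (0 : ℝ), 0 < u y)
    (hlim : Tendsto u atTop (nhds 0)) : StrictAntiOn u (Ici 0) :=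
  strictAntiOn_Ici_of_hasDerivAt_neg hu fun _ hy => airy_deriv_neg hu hv hpos hlim hy.le

lemma hasDerivAt_airyEnergy (hu : ∀ y ≥ (0 : ℝ), HasDerivAt u (v y) y)
    (hv : ∀ y ≥ (0 : ℝ), HasDerivAt v (y * u y) y) {y : ℝ} (hy : 0 ≤ y) :
    HasDerivAt (airyEnergy u v) (-(u y ^ 2)) y := by
  have h := ((hv y hy).fun_pow 2).fun_sub ((hasDerivAt_id' y).fun_mul ((hu y hy).fun_pow 2))
  exact h.congr_deriv (by ring)

lemma strictAntiOn_airyEnergy (hu : ∀ y ≥ (0 : ℝ), HasDerivAt u (v y) y)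
    (hv : ∀ y ≥ (0 : ℝ), HasDerivAt v (y * u y) y) (hpos : ∀ y ≥ (0 : ℝ), 0 < u y) :
    StrictAntiOn (airyEnergy u v) (Ici 0) :=
  strictAntiOn_Ici_of_hasDerivAt_neg (fun _ hy => hasDerivAt_airyEnergy hu hv hy)
    fun y hy => neg_neg_of_pos (pow_pos (hpos y hy.le) 2)

lemma neg_airyEnergy_div_le_mul (hu : ∀ y ≥ (0 : ℝ), HasDerivAt u (v y) y)
    (hv : ∀ y ≥ (0 : ℝ), HasDerivAt v (y * u y) y) (hpos : ∀ y ≥ (0 : ℝ), 0 < u y)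
    (hlim : Tendsto u atTop (nhds 0)) {y₀ : ℝ} (hy₀ : 0 ≤ y₀)
    {y : ℝ} (hy : y₀ ≤ y) : -airyEnergy u v y₀ / u y₀ ≤ y * u y := by
  have hy0 : 0 ≤ y := hy₀.trans hy
  have hE_le : airyEnergy u v y ≤ airyEnergy u v y₀ :=
    (strictAntiOn_airyEnergy hu hv hpos).antitoneOn (mem_Ici.2 hy₀) (mem_Ici.2 hy0) hy
  have hu_le : u y ≤ u y₀ :=
    (airy_strictAntiOn hu hv hpos hlim).antitoneOn (mem_Ici.2 hy₀) (mem_Ici.2 hy0) hy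
  have hsq : -airyEnergy u v y₀ ≤ y * u y * u y := by
    unfold airyEnergy at hE_le ⊢
    nlinarith [sq_nonneg (v y)]
  rw [div_le_iff₀ (hpos y₀ hy₀)]
  exact hsq.trans (mul_le_mul_of_nonneg_left hu_le (mul_nonneg hy0 (hpos y hy0).le))

lemma airyEnergy_pos (hu : ∀ y ≥ (0 : ℝ), HasDerivAt u (v y) y)
    (hv : ∀ y ≥ (0 : ℝ), HasDerivAt v (y * u y) y) (hpos : ∀ y ≥ (0 : ℝ), 0 < u y)
    (hlim : Tendsto u atTop (nhds 0)) {y : ℝ} (hy : 0 ≤ y) : 0 < airyEnergy u v y := by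
  by_contra! hE
  set y₀ := y + 1
  have hy₀ : 0 ≤ y₀ := by positivity
  have hE₀ : airyEnergy u v y₀ < 0 :=
    ((strictAntiOn_airyEnergy hu hv hpos) (mem_Ici.2 hy) (mem_Ici.2 hy₀) (lt_add_one y)).trans_le hE
  set d := -airyEnergy u v y₀ / u y₀
  have hd : 0 < d := div_pos (neg_pos.2 hE₀) (hpos y₀ hy₀)
  -- `v' ≥ d` beyond `y₀`, so `v` reaches `0` by time `Y`.
  set Y := y₀ - v y₀ / d
  have hY : y₀ ≤ Y := (le_sub_self_iff y₀).2 (div_nonpos_of_nonpos_of_nonneg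
    (airy_deriv_neg hu hv hpos hlim hy₀).le hd.le)
  have hgrowth : d * (Y - y₀) ≤ v Y - v y₀ :=
    mul_sub_le_sub_of_hasDerivAt_ge (fun t ht => hv t (hy₀.trans ht))
      (fun t ht => neg_airyEnergy_div_le_mul hu hv hpos hlim hy₀ ht.le) hY
  have hdY : d * (Y - y₀) = -v y₀ := by
    simp only [Y]
    field_simp
    ring
  have hvY := airy_deriv_neg hu hv hpos hlim (hy₀.trans hY)
  linarith

lemma airy_mul_add_deriv_neg (hu : ∀ y ≥ (0 : ℝ), HasDerivAt u (v y) y)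
    (hv : ∀ y ≥ (0 : ℝ), HasDerivAt v (y * u y) y) (hpos : ∀ y ≥ (0 : ℝ), 0 < u y)
    (hlim : Tendsto u atTop (nhds 0)) {μ : ℝ} {y : ℝ} (hy : μ ^ 2 ≤ y) :
    μ * u y + v y < 0 := by
  have hy0 : 0 ≤ y := (sq_nonneg μ).trans hy
  have hE := airyEnergy_pos hu hv hpos hlim hy0
  have hvneg := airy_deriv_neg hu hv hpos hlim hy0
  have hsq : (μ * u y) ^ 2 < v y ^ 2 := by
    unfold airyEnergy at hE
    nlinarith [mul_le_mul_of_nonneg_right hy (sq_nonneg (u y))]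
  nlinarith

end Airy

lemma strictAntiOn_exp_mul_mul_comp_add {u v : ℝ → ℝ} {c μ : ℝ}
    (hu : ∀ y ≥ c, HasDerivAt u (v y) y) (h : ∀ x ≥ (0 : ℝ), μ * u (c + x) + v (c + x) < 0) :
    StrictAntiOn (fun x => exp (μ * x) * u (c + x)) (Ici 0) := by
  refine strictAntiOn_Ici_of_hasDerivAt_neg
    (f' := fun x => exp (μ * x) * (μ * u (c + x) + v (c + x))) (fun x hx => ?_) fun x hx => mul_neg_of_pos_of_neg (exp_pos _) (h x hx.le)
  have hexp := ((hasDerivAt_id' x).const_mul μ).exp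
  have hshift := (hu (c + x) (le_add_of_nonneg_right hx)).comp_const_add c x
  exact (hexp.fun_mul hshift).congr_deriv (by ring)

theorem airy_decreasing_solution_general (u : ℝ → ℝ) (hu : ContDiff ℝ 2 u)
    (hode : ∀ y ≥ (0:ℝ), deriv (deriv u) y = y * u y)
    (hpos : ∀ y ≥ (0:ℝ), 0 < u y)
    (hlim : Tendsto u atTop (nhds 0))
    (μ : ℝ) :
    (∀ x ≥ (0:ℝ), μ * u (μ ^ 2 + x) + deriv u (μ ^ 2 + x) < 0) ∧
    StrictAntiOn (fun x => Real.exp (μ * x) * u (μ ^ 2 + x)) (Set.Ici 0) := by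
  have hu' : ∀ y, HasDerivAt u (deriv u y) y :=
    fun y => (hu.differentiable (by norm_num) y).hasDerivAt
  have hv' : ∀ y ≥ (0:ℝ), HasDerivAt (deriv u) (y * u y) y :=
    fun y hy => hode y hy ▸ (hu.differentiable_deriv_two y).hasDerivAt
  have hneg : ∀ x ≥ (0:ℝ), μ * u (μ ^ 2 + x) + deriv u (μ ^ 2 + x) < 0 := fun x hx =>
    airy_mul_add_deriv_neg (fun y _ => hu' y) hv' hpos hlim (le_add_of_nonneg_right hx)
  exact ⟨hneg, strictAntiOn_exp_mul_mul_comp_add (fun y _ => hu' y) hneg⟩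

/-- If `u` is a twice continuously differentiable, positive solution of the
Airy equation `u'' = y·u` on `[0,∞)` tending to `0` at infinity, then for every `μ ≥ 0`
and `x ≥ 0` we have `μ·u(μ²+x) + u'(μ²+x) < 0`; consequently
`x ↦ exp(μx)·u(μ²+x)` is strictly decreasing on `[0,∞)`. -/
theorem airy_decreasing_solution (u : ℝ → ℝ) (hu : ContDiff ℝ 2 u)
    (hode : ∀ y ≥ (0:ℝ), deriv (deriv u) y = y * u y)
    (hpos : ∀ y ≥ (0:ℝ), 0 < u y)
    (hlim : Tendsto u atTop (nhds 0))
    (μ : ℝ) (hμ : 0 ≤ μ) :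
    (∀ x ≥ (0:ℝ), μ * u (μ ^ 2 + x) + deriv u (μ ^ 2 + x) < 0) ∧
    StrictAntiOn (fun x => Real.exp (μ * x) * u (μ ^ 2 + x)) (Set.Ici 0) :=
  airy_decreasing_solution_general u hu hode hpos hlim μ
end

section
/- Let u : ℝ → ℝ be twice continuously differentiable with u''(y) = y·u(y) for all y ≥ 0, u(y) > 0 for all y ≥ 0, and u(y) → 0 as y → ∞, and let v : ℝ → ℝ be twice continuously differentiable with v''(y) = y·v(y), v(y) > 0 and v'(y) > 0 for all y ≥ 0. Fix μ ≥ 0 and set C := −(μ·v(μ²) + v'(μ²)) / (μ·u(μ²) + u'(μ²)) (the denominator is nonzero since μ·u(μ²)+u'(μ²) < 0) and ψ(x) := e^{μx}·( C·u(μ² + x) + v(μ² + x) ) for x ≥ 0. Then ψ'(0) = 0 and ψ'(x) > 0 for all x > 0. -/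
open Real Filter Set Topology

/-!
With `a = μ²` and `G = C u + v` one has `ψ'(x) = e^{μx} (μ G + G')(a + x)`. For any solution
`w` of `w'' = y w`, the function `e^{-μy} (μ w + w')(y)` has derivative
`e^{-μy} (y - a) w(y)`, so it is strictly increasing on `[a, ∞)` when `w > 0`. The constant `C`
is the one making `(μ G + G')(a) = 0`; this gives `ψ'(0) = 0`, and then `ψ' > 0` on `(0, ∞)`.

`C > 0` (hence `G > 0`) needs `(μ u + u')(a) < 0`. Otherwise the same monotonicity bounds
`μ u + u'` below by a positive constant far out; as `μ u → 0`, `u` is then eventually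
increasing, which is impossible for `u > 0` with `u → 0`.
-/

structure IsAirySolution (w : ℝ → ℝ) : Prop where
  differentiable : Differentiable ℝ w
  differentiable_deriv : Differentiable ℝ (deriv w)
  deriv_deriv : ∀ y ≥ (0 : ℝ), deriv (deriv w) y = y * w y

noncomputable def tiltedDeriv (μ : ℝ) (w : ℝ → ℝ) (y : ℝ) : ℝ := μ * w y + deriv w y

lemma tiltedDeriv_const_mul_add {u v : ℝ → ℝ} {y : ℝ} (hu : DifferentiableAt ℝ u y)
    (hv : DifferentiableAt ℝ v y) (c μ : ℝ) :
    tiltedDeriv μ (fun y => c * u y + v y) y = c * tiltedDeriv μ u y + tiltedDeriv μ v y := by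
  rw [tiltedDeriv, tiltedDeriv, tiltedDeriv, deriv_fun_add (hu.const_mul c) hv,
    deriv_const_mul c hu]
  ring

lemma hasDerivAt_exp_mul_comp_const_add {G : ℝ → ℝ} (hG : Differentiable ℝ G)
    (μ a x : ℝ) :
    HasDerivAt (fun x => exp (μ * x) * G (a + x)) (exp (μ * x) * tiltedDeriv μ G (a + x)) x := by
  have hexp : HasDerivAt (fun x => exp (μ * x)) (exp (μ * x) * μ) x := by
    simpa using ((hasDerivAt_id x).const_mul μ).exp
  have hshift : HasDerivAt (fun x => G (a + x)) (deriv G (a + x)) x :=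
    (hG (a + x)).hasDerivAt.comp_const_add a x
  exact (hexp.mul hshift).congr_deriv (by unfold tiltedDeriv; ring)

namespace IsAirySolution

variable {w : ℝ → ℝ}

lemma of_contDiff (hw : ContDiff ℝ 2 w)
    (hode : ∀ y ≥ (0 : ℝ), deriv (deriv w) y = y * w y) : IsAirySolution w :=
  ⟨hw.differentiable two_ne_zero, hw.differentiable_deriv_two, hode⟩

lemma const_mul_add {u v : ℝ → ℝ} (hu : IsAirySolution u) (hv : IsAirySolution v) (c : ℝ) :
    IsAirySolution (fun y => c * u y + v y) := by
  have hderiv : deriv (fun y => c * u y + v y) = fun y => c * deriv u y + deriv v y := by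
    ext y
    rw [deriv_fun_add ((hu.differentiable y).const_mul c) (hv.differentiable y),
      deriv_const_mul c (hu.differentiable y)]
  refine ⟨fun y => ((hu.differentiable y).const_mul c).add (hv.differentiable y), ?_, ?_⟩
  · rw [hderiv]
    exact fun y => ((hu.differentiable_deriv y).const_mul c).add (hv.differentiable_deriv y)
  · intro y hy
    rw [hderiv, deriv_fun_add ((hu.differentiable_deriv y).const_mul c) (hv.differentiable_deriv y),
      deriv_const_mul c (hu.differentiable_deriv y), hu.deriv_deriv y hy, hv.deriv_deriv y hy]
    ring

lemma hasDerivAt_exp_mul_tiltedDeriv (hw : IsAirySolution w) (μ : ℝ) {y : ℝ} (hy : 0 ≤ y) :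
    HasDerivAt (fun y => exp (-(μ * y)) * tiltedDeriv μ w y)
      (exp (-(μ * y)) * ((y - μ ^ 2) * w y)) y := by
  have hexp : HasDerivAt (fun y => exp (-(μ * y))) (exp (-(μ * y)) * -μ) y := by
    simpa using ((hasDerivAt_id y).const_mul (-μ)).exp
  have htilt : HasDerivAt (tiltedDeriv μ w) (μ * deriv w y + deriv (deriv w) y) y :=
    ((hw.differentiable y).hasDerivAt.const_mul μ).add (hw.differentiable_deriv y).hasDerivAt
  refine (hexp.mul htilt).congr_deriv ?_
  rw [hw.deriv_deriv y hy]
  unfold tiltedDeriv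
  ring

lemma strictMonoOn_exp_mul_tiltedDeriv (hw : IsAirySolution w) (hpos : ∀ y ≥ (0 : ℝ), 0 < w y)
    (μ : ℝ) : StrictMonoOn (fun y => exp (-(μ * y)) * tiltedDeriv μ w y) (Ici (μ ^ 2)) := by
  have hcont : Continuous (fun y => exp (-(μ * y)) * tiltedDeriv μ w y) := by
    have := hw.differentiable.continuous
    have := hw.differentiable_deriv.continuous
    unfold tiltedDeriv
    fun_prop
  refine strictMonoOn_of_deriv_pos (convex_Ici _) hcont.continuousOn fun y hy => ?_
  rw [interior_Ici, mem_Ioi] at hy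
  have hy0 : 0 ≤ y := (sq_nonneg μ).trans hy.le
  rw [(hw.hasDerivAt_exp_mul_tiltedDeriv μ hy0).deriv]
  exact mul_pos (exp_pos _) (mul_pos (sub_pos.mpr hy) (hpos y hy0))

lemma tiltedDeriv_pos (hw : IsAirySolution w) (hpos : ∀ y ≥ (0 : ℝ), 0 < w y) {μ y : ℝ}
    (h0 : 0 ≤ tiltedDeriv μ w (μ ^ 2)) (hy : μ ^ 2 < y) : 0 < tiltedDeriv μ w y := by
  have hlt := hw.strictMonoOn_exp_mul_tiltedDeriv hpos μ self_mem_Ici (mem_Ici.mpr hy.le) hy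
  exact pos_of_mul_pos_right ((mul_nonneg (exp_pos _).le h0).trans_lt hlt) (exp_pos _).le

lemma tiltedDeriv_neg_of_tendsto_zero (hw : IsAirySolution w) (hpos : ∀ y ≥ (0 : ℝ), 0 < w y)
    (hlim : Tendsto w atTop (𝓝 0)) {μ : ℝ} (hμ : 0 ≤ μ) :
    tiltedDeriv μ w (μ ^ 2) < 0 := by
  by_contra! h0
  set b := μ ^ 2 + 1
  set δ := exp (-(μ * b)) * tiltedDeriv μ w b
  have hδ : 0 < δ := mul_pos (exp_pos _) (hw.tiltedDeriv_pos hpos h0 (by linarith))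
  have hlower : ∀ y ≥ b, δ ≤ tiltedDeriv μ w y := by
    intro y hy
    have hb : μ ^ 2 ≤ b := by linarith
    have hFy : δ ≤ exp (-(μ * y)) * tiltedDeriv μ w y :=
      (hw.strictMonoOn_exp_mul_tiltedDeriv hpos μ).monotoneOn hb (hb.trans hy) hy
    have hexp : exp (-(μ * y)) ≤ 1 := exp_le_one_iff.mpr (by nlinarith)
    exact hFy.trans (mul_le_of_le_one_left (hw.tiltedDeriv_pos hpos h0 (by linarith)).le hexp)
  have hsmall : ∀ᶠ y in atTop, μ * w y < δ := by
    have : Tendsto (fun y => μ * w y) atTop (𝓝 0) := by simpa using hlim.const_mul μ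
    exact this.eventually_lt_const hδ
  obtain ⟨N, hN⟩ := eventually_atTop.mp (hsmall.and (eventually_ge_atTop b))
  have hN0 : 0 ≤ N := by nlinarith [(hN N le_rfl).2]
  have hmono : MonotoneOn w (Ici N) := by
    refine monotoneOn_of_deriv_nonneg (convex_Ici N) hw.differentiable.continuous.continuousOn
      hw.differentiable.differentiableOn fun y hy => ?_
    rw [interior_Ici, mem_Ioi] at hy
    have hδ_le := hlower y (hN y hy.le).2
    have hsmall_y := (hN y hy.le).1
    unfold tiltedDeriv at hδ_le
    linarith
  have hN_nonpos : w N ≤ 0 :=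
    ge_of_tendsto hlim (eventually_atTop.mpr ⟨N, fun y hy => hmono self_mem_Ici hy hy⟩)
  exact (hpos N hN0).not_ge hN_nonpos

end IsAirySolution

/-- Let `u` be a positive, decaying solution of the Airy equation `u'' = y·u`
on `[0,∞)` and `v` a positive solution with positive derivative on `[0,∞)`. For `μ ≥ 0`,
with `C := −(μ·v(μ²)+v'(μ²))/(μ·u(μ²)+u'(μ²))` and
`ψ(x) := exp(μx)·(C·u(μ²+x) + v(μ²+x))`, we have `ψ'(0) = 0` and `ψ'(x) > 0` for `x > 0`. -/
theorem airy_increasing_solution (u v : ℝ → ℝ)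
    (hu : ContDiff ℝ 2 u) (hv : ContDiff ℝ 2 v)
    (hu_ode : ∀ y ≥ (0:ℝ), deriv (deriv u) y = y * u y)
    (hu_pos : ∀ y ≥ (0:ℝ), 0 < u y)
    (hu_lim : Tendsto u atTop (nhds 0))
    (hv_ode : ∀ y ≥ (0:ℝ), deriv (deriv v) y = y * v y)
    (hv_pos : ∀ y ≥ (0:ℝ), 0 < v y)
    (hv'_pos : ∀ y ≥ (0:ℝ), 0 < deriv v y)
    (μ : ℝ) (hμ : 0 ≤ μ)
    (C : ℝ)
    (hC : C = -(μ * v (μ ^ 2) + deriv v (μ ^ 2)) / (μ * u (μ ^ 2) + deriv u (μ ^ 2)))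
    (ψ : ℝ → ℝ)
    (hψ : ∀ x, ψ x = Real.exp (μ * x) * (C * u (μ ^ 2 + x) + v (μ ^ 2 + x))) :
    deriv ψ 0 = 0 ∧ ∀ x > (0:ℝ), 0 < deriv ψ x := by
  have hu' := IsAirySolution.of_contDiff hu hu_ode
  have hv' := IsAirySolution.of_contDiff hv hv_ode
  have hC' : C = -tiltedDeriv μ v (μ ^ 2) / tiltedDeriv μ u (μ ^ 2) := hC
  have hu_tilt : tiltedDeriv μ u (μ ^ 2) < 0 :=
    hu'.tiltedDeriv_neg_of_tendsto_zero hu_pos hu_lim hμ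
  have hv_tilt : 0 < tiltedDeriv μ v (μ ^ 2) :=
    add_pos_of_nonneg_of_pos (mul_nonneg hμ (hv_pos _ (sq_nonneg μ)).le)
      (hv'_pos _ (sq_nonneg μ))
  have hC_pos : 0 < C := hC' ▸ div_pos_of_neg_of_neg (neg_neg_of_pos hv_tilt) hu_tilt
  set G : ℝ → ℝ := fun y => C * u y + v y
  have hG : IsAirySolution G := hu'.const_mul_add hv' C
  have hG_pos : ∀ y ≥ (0:ℝ), 0 < G y := fun y hy =>
    add_pos (mul_pos hC_pos (hu_pos y hy)) (hv_pos y hy)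
  have hG_tilt : tiltedDeriv μ G (μ ^ 2) = 0 := by
    rw [tiltedDeriv_const_mul_add (hu'.differentiable _) (hv'.differentiable _), hC',
      div_mul_cancel₀ _ hu_tilt.ne, neg_add_cancel]
  have hψ_deriv : ∀ x, deriv ψ x = exp (μ * x) * tiltedDeriv μ G (μ ^ 2 + x) := by
    rw [funext hψ]
    exact fun x => (hasDerivAt_exp_mul_comp_const_add hG.differentiable μ (μ ^ 2) x).deriv
  refine ⟨by rw [hψ_deriv, add_zero, hG_tilt, mul_zero], fun x hx => ?_⟩
  rw [hψ_deriv]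
  exact mul_pos (exp_pos _) (hG.tiltedDeriv_pos hG_pos hG_tilt.ge (by linarith))
end

section
/- Let μ ≥ 0 and let Φ, Ψ : [0,∞) → ℝ be twice continuously differentiable with Φ''(x) + 2μΦ'(x) − xΦ(x) = 0 and Ψ''(x) + 2μΨ'(x) − xΨ(x) = 0 for all x ≥ 0. Set φ(x) := e^{2μx}Φ(x) and ψ(x) := e^{2μx}Ψ(x), and assume: (a) φ(x)Ψ'(x) − ψ(x)Φ'(x) = 1 for all x ≥ 0; (b) Φ(y) → 0, y·Φ(y) → 0 and y·Φ'(y) → 0 as y → ∞; (c) the functions y ↦ Φ(y) and y ↦ y²·Φ(y) are Lebesgue integrable on [0,∞). Then for every x ≥ 0: φ(x)·∫₀ˣ y²Ψ(y) dy + ψ(x)·∫ₓ^∞ y²Φ(y) dy = x + φ(x)·Ψ(0) − 2μ·( φ(x)·∫₀ˣ Ψ(y) dy + ψ(x)·∫ₓ^∞ Φ(y) dy ). -/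
open Real Filter Set MeasureTheory

/-!
For a solution `w` of `w'' + 2μw' = yw`, the function `y (w' + 2μw) - w` is a primitive of
`(y² + 2μ) w`. Integrating `(y² + 2μ) Ψ` over `[0, x]` and `(y² + 2μ) Φ` over `(x, ∞)`,
the boundary terms combine through the Wronskian identity `φΨ' - ψΦ' = 1` and through `φΨ = ψΦ`
(both sides equal `e^{2μx} ΦΨ`) into `x + φ(x) Ψ(0)`.
-/

noncomputable def momentPrimitive (μ : ℝ) (w : ℝ → ℝ) (y : ℝ) : ℝ :=
  y * (deriv w y + 2 * μ * w y) - w y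

section

variable {μ : ℝ} {w : ℝ → ℝ}

theorem momentPrimitive_zero : momentPrimitive μ w 0 = -w 0 := by
  simp [momentPrimitive]

theorem hasDerivAt_momentPrimitive {y : ℝ} (hw : DifferentiableAt ℝ w y)
    (hw' : DifferentiableAt ℝ (deriv w) y)
    (hode : deriv (deriv w) y + 2 * μ * deriv w y - y * w y = 0) :
    HasDerivAt (momentPrimitive μ w) (2 * μ * w y + y ^ 2 * w y) y := by
  have h : HasDerivAt (momentPrimitive μ w) (1 * (deriv w y + 2 * μ * w y)
      + y * (deriv (deriv w) y + 2 * μ * deriv w y) - deriv w y) y :=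
    ((hasDerivAt_id y).mul (hw'.hasDerivAt.add (hw.hasDerivAt.const_mul (2 * μ)))).sub
      hw.hasDerivAt
  convert h using 1
  linear_combination (-y) * hode

theorem tendsto_momentPrimitive_atTop (h₀ : Tendsto w atTop (nhds 0))
    (h₁ : Tendsto (fun y => y * w y) atTop (nhds 0))
    (h₁' : Tendsto (fun y => y * deriv w y) atTop (nhds 0)) :
    Tendsto (momentPrimitive μ w) atTop (nhds 0) := by
  have h := (h₁'.add (h₁.const_mul (2 * μ))).sub h₀
  simp only [mul_zero, add_zero, sub_zero] at h
  exact h.congr fun y => by simp only [momentPrimitive]; ring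

theorem intervalIntegral_sq_mul_eq_momentPrimitive_sub (hw : ContDiff ℝ 2 w) {a b : ℝ}
    (hode : ∀ y ∈ uIcc a b, deriv (deriv w) y + 2 * μ * deriv w y - y * w y = 0) :
    ∫ y in a..b, y ^ 2 * w y
      = momentPrimitive μ w b - momentPrimitive μ w a - 2 * μ * ∫ y in a..b, w y := by
  have hwc : Continuous w := hw.continuous
  have hFTC : ∫ y in a..b, (2 * μ * w y + y ^ 2 * w y)
      = momentPrimitive μ w b - momentPrimitive μ w a :=
    intervalIntegral.integral_eq_sub_of_hasDerivAt
      (fun y hy => hasDerivAt_momentPrimitive (hw.differentiable two_ne_zero y)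
        (hw.differentiable_deriv_two y) (hode y hy))
      ((by fun_prop : Continuous fun y => 2 * μ * w y + y ^ 2 * w y).intervalIntegrable _ _)
  rw [← hFTC, intervalIntegral.integral_add ((hwc.intervalIntegrable a b).const_mul _)
    ((by fun_prop : Continuous fun y => y ^ 2 * w y).intervalIntegrable a b),
    intervalIntegral.integral_const_mul]
  ring

theorem integral_Ioi_sq_mul_eq_neg_momentPrimitive (hw : ContDiff ℝ 2 w) {a : ℝ}
    (hode : ∀ y ∈ Ici a, deriv (deriv w) y + 2 * μ * deriv w y - y * w y = 0)
    (hlim : Tendsto (momentPrimitive μ w) atTop (nhds 0))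
    (hint : IntegrableOn w (Ioi a)) (hint₂ : IntegrableOn (fun y => y ^ 2 * w y) (Ioi a)) :
    ∫ y in Ioi a, y ^ 2 * w y = -momentPrimitive μ w a - 2 * μ * ∫ y in Ioi a, w y := by
  have hFTC : ∫ y in Ioi a, (2 * μ * w y + y ^ 2 * w y) = 0 - momentPrimitive μ w a :=
    integral_Ioi_of_hasDerivAt_of_tendsto'
      (fun y hy => hasDerivAt_momentPrimitive (hw.differentiable two_ne_zero y)
        (hw.differentiable_deriv_two y) (hode y hy))
      ((hint.const_mul _).add hint₂) hlim
  rw [integral_add (hint.const_mul _) hint₂, integral_const_mul] at hFTC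
  linear_combination hFTC

end

theorem expected_killing_position_identity_general (μ : ℝ) (Φ Ψ : ℝ → ℝ)
    (hΦ : ContDiff ℝ 2 Φ) (hΨ : ContDiff ℝ 2 Ψ)
    (hΦ_ode : ∀ x ≥ (0:ℝ), deriv (deriv Φ) x + 2 * μ * deriv Φ x - x * Φ x = 0)
    (hΨ_ode : ∀ x ≥ (0:ℝ), deriv (deriv Ψ) x + 2 * μ * deriv Ψ x - x * Ψ x = 0)
    (φ ψ : ℝ → ℝ)
    (hφ : ∀ x, φ x = Real.exp (2 * μ * x) * Φ x)
    (hψ : ∀ x, ψ x = Real.exp (2 * μ * x) * Ψ x)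
    (hwr : ∀ x ≥ (0:ℝ), φ x * deriv Ψ x - ψ x * deriv Φ x = 1)
    (hΦ_lim : Tendsto Φ atTop (nhds 0))
    (hΦ_lim' : Tendsto (fun y => y * Φ y) atTop (nhds 0))
    (hΦ'_lim : Tendsto (fun y => y * deriv Φ y) atTop (nhds 0))
    (hΦ_int : IntegrableOn Φ (Set.Ici 0))
    (hΦ_int2 : IntegrableOn (fun y => y ^ 2 * Φ y) (Set.Ici 0)) :
    ∀ x ≥ (0:ℝ),
      φ x * (∫ y in (0:ℝ)..x, y ^ 2 * Ψ y) + ψ x * (∫ y in Set.Ioi x, y ^ 2 * Φ y)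
        = x + φ x * Ψ 0
          - 2 * μ * (φ x * (∫ y in (0:ℝ)..x, Ψ y) + ψ x * (∫ y in Set.Ioi x, Φ y)) := by
  intro x hx
  have hIoi : Ioi x ⊆ Ici 0 := fun y hy => hx.trans (le_of_lt hy)
  have hΨ_moment := intervalIntegral_sq_mul_eq_momentPrimitive_sub hΨ
    (fun y hy => hΨ_ode y (by rw [uIcc_of_le hx] at hy; exact hy.1))
  have hΦ_moment := integral_Ioi_sq_mul_eq_neg_momentPrimitive hΦ
    (fun y hy => hΦ_ode y (hx.trans hy))
    (tendsto_momentPrimitive_atTop hΦ_lim hΦ_lim' hΦ'_lim) (hΦ_int.mono_set hIoi)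
    (hΦ_int2.mono_set hIoi)
  have hsym : φ x * Ψ x = ψ x * Φ x := by rw [hφ, hψ]; ring
  rw [hΨ_moment, hΦ_moment, momentPrimitive_zero]
  simp only [momentPrimitive]
  linear_combination x * hwr x hx + (2 * μ * x - 1) * hsym

/-- Integration-by-parts identity for the expected killing position of
reflecting Brownian motion with drift `−μ` killed at rate `x/2`.  Here `Φ, Ψ` solve
`w'' + 2μw' − xw = 0` on `[0,∞)`, `φ = e^{2μx}Φ`, `ψ = e^{2μx}Ψ`, the (normalized)
Wronskian identity (a) holds, `Φ` decays suitably at infinity (b), and `Φ`, `y²Φ`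
are integrable (c).  Then
`φ(x)∫₀ˣ y²Ψ + ψ(x)∫ₓ^∞ y²Φ = x + φ(x)Ψ(0) − 2μ(φ(x)∫₀ˣΨ + ψ(x)∫ₓ^∞Φ)`. -/
theorem expected_killing_position_identity (μ : ℝ) (hμ : 0 ≤ μ) (Φ Ψ : ℝ → ℝ)
    (hΦ : ContDiff ℝ 2 Φ) (hΨ : ContDiff ℝ 2 Ψ)
    (hΦ_ode : ∀ x ≥ (0:ℝ), deriv (deriv Φ) x + 2 * μ * deriv Φ x - x * Φ x = 0)
    (hΨ_ode : ∀ x ≥ (0:ℝ), deriv (deriv Ψ) x + 2 * μ * deriv Ψ x - x * Ψ x = 0)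
    (φ ψ : ℝ → ℝ)
    (hφ : ∀ x, φ x = Real.exp (2 * μ * x) * Φ x)
    (hψ : ∀ x, ψ x = Real.exp (2 * μ * x) * Ψ x)
    (hwr : ∀ x ≥ (0:ℝ), φ x * deriv Ψ x - ψ x * deriv Φ x = 1)
    (hΦ_lim : Tendsto Φ atTop (nhds 0))
    (hΦ_lim' : Tendsto (fun y => y * Φ y) atTop (nhds 0))
    (hΦ'_lim : Tendsto (fun y => y * deriv Φ y) atTop (nhds 0))
    (hΦ_int : IntegrableOn Φ (Set.Ici 0))
    (hΦ_int2 : IntegrableOn (fun y => y ^ 2 * Φ y) (Set.Ici 0)) :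
    ∀ x ≥ (0:ℝ),
      φ x * (∫ y in (0:ℝ)..x, y ^ 2 * Ψ y) + ψ x * (∫ y in Set.Ioi x, y ^ 2 * Φ y)
        = x + φ x * Ψ 0
          - 2 * μ * (φ x * (∫ y in (0:ℝ)..x, Ψ y) + ψ x * (∫ y in Set.Ioi x, Φ y)) :=
  expected_killing_position_identity_general μ Φ Ψ hΦ hΨ hΦ_ode hΨ_ode φ ψ hφ hψ hwr hΦ_lim hΦ_lim'
    hΦ'_lim hΦ_int hΦ_int2
end

section
/- Let μ ≥ 0 and suppose f, g : [0,∞) → ℝ are twice continuously differentiable, satisfy w''(x) + 2μw'(x) − x·w(x) = 0 for all x ≥ 0, and are positive and non-increasing on [0,∞). Then there exists a constant c > 0 with g(x) = c·f(x) for all x ≥ 0. -/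
/-!
If `f` and `g` are two positive non-increasing solutions, `h = g - (g 0 / f 0) • f` is a solution
with `h 0 = 0` which is bounded on `[0, ∞)`, since `0 < f ≤ f 0` and `0 < g ≤ g 0` there.
For any solution, `v = e^{2μx} h h'` satisfies `v' = e^{2μx} (h'² + x h²) ≥ 0`, so `h 0 = 0`
forces `h h' ≥ 0`, i.e. `h²` is non-decreasing. If `h x₀ ≠ 0`, the term `x h²` in `v'` then keeps
`h h'` above a positive constant from `x₀ + 1` on, so `h²` grows linearly: `h` is unbounded.
-/

open Real Set

/-- Its solutions are `e^{-μx} (a Ai + b Bi) (μ² + x)`, hence the name. -/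
def IsDriftedAirySolution (μ : ℝ) (w : ℝ → ℝ) : Prop :=
  ContDiff ℝ 2 w ∧ ∀ x ≥ (0:ℝ), deriv (deriv w) x + 2 * μ * deriv w x - x * w x = 0

lemma mul_sub_le_sub_of_hasDerivAt {F F' : ℝ → ℝ} {a b K : ℝ} (hab : a ≤ b)
    (hF : ∀ t ∈ Icc a b, HasDerivAt F (F' t) t) (hK : ∀ t ∈ Icc a b, K ≤ F' t) :
    K * (b - a) ≤ F b - F a :=
  (convex_Icc a b).mul_sub_le_image_sub_of_le_deriv
    (fun t ht => (hF t ht).continuousAt.continuousWithinAt)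
    (fun t ht => (hF t (interior_subset ht)).differentiableAt.differentiableWithinAt)
    (fun t ht => (hF t (interior_subset ht)).deriv ▸ hK t (interior_subset ht))
    a (left_mem_Icc.2 hab) b (right_mem_Icc.2 hab) hab

namespace IsDriftedAirySolution

variable {μ : ℝ} {w : ℝ → ℝ}

lemma differentiable (hw : IsDriftedAirySolution μ w) : Differentiable ℝ w :=
  hw.1.differentiable two_ne_zero

lemma differentiable_deriv (hw : IsDriftedAirySolution μ w) : Differentiable ℝ (deriv w) :=
  (hw.1.iterate_deriv' 1 1).differentiable one_ne_zero

lemma hasDerivAt_deriv (hw : IsDriftedAirySolution μ w) {x : ℝ} (hx : 0 ≤ x) :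
    HasDerivAt (deriv w) (x * w x - 2 * μ * deriv w x) x :=
  (hw.differentiable_deriv x).hasDerivAt.congr_deriv (by linarith [hw.2 x hx])

lemma sub_const_mul {f g : ℝ → ℝ} (hg : IsDriftedAirySolution μ g)
    (hf : IsDriftedAirySolution μ f) (c : ℝ) :
    IsDriftedAirySolution μ (fun x => g x - c * f x) := by
  refine ⟨hg.1.sub (contDiff_const.mul hf.1), fun x hx => ?_⟩
  have hd : deriv (fun x => g x - c * f x) = fun x => deriv g x - c * deriv f x := by
    funext y
    exact ((hg.differentiable y).hasDerivAt.sub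
      ((hf.differentiable y).hasDerivAt.const_mul c)).deriv
  have hd2 : deriv (deriv fun x => g x - c * f x) x
      = (x * g x - 2 * μ * deriv g x) - c * (x * f x - 2 * μ * deriv f x) := by
    rw [hd]
    exact ((hg.hasDerivAt_deriv hx).sub ((hf.hasDerivAt_deriv hx).const_mul c)).deriv
  rw [hd2, hd]
  ring

lemma hasDerivAt_sq (hw : IsDriftedAirySolution μ w) (x : ℝ) :
    HasDerivAt (fun t => w t ^ 2) (2 * (w x * deriv w x)) x :=
  ((hw.differentiable x).hasDerivAt.pow 2).congr_deriv (by ring)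

lemma hasDerivAt_exp_mul_mul_deriv (hw : IsDriftedAirySolution μ w) {x : ℝ} (hx : 0 ≤ x) :
    HasDerivAt (fun t => exp (2 * μ * t) * (w t * deriv w t))
      (exp (2 * μ * x) * (deriv w x ^ 2 + x * w x ^ 2)) x := by
  have he : HasDerivAt (fun t => exp (2 * μ * t)) (exp (2 * μ * x) * (2 * μ)) x := by
    simpa using ((hasDerivAt_id x).const_mul (2 * μ)).exp
  exact (he.mul ((hw.differentiable x).hasDerivAt.mul (hw.hasDerivAt_deriv hx))).congr_deriv
    (by simp only [Pi.mul_apply]; ring)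

lemma mul_deriv_nonneg (hw : IsDriftedAirySolution μ w) (h0 : w 0 = 0) {x : ℝ} (hx : 0 ≤ x) :
    0 ≤ w x * deriv w x := by
  have hv := mul_sub_le_sub_of_hasDerivAt hx (fun t ht => hw.hasDerivAt_exp_mul_mul_deriv ht.1)
    (fun t ht => mul_nonneg (exp_pos _).le
      (add_nonneg (sq_nonneg _) (mul_nonneg ht.1 (sq_nonneg _))))
  simp only [h0, zero_mul, mul_zero, sub_zero] at hv
  exact (mul_nonneg_iff_of_pos_left (exp_pos _)).1 hv

lemma monotoneOn_sq (hw : IsDriftedAirySolution μ w) (h0 : w 0 = 0) :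
    MonotoneOn (fun x => w x ^ 2) (Ici 0) := fun a ha b _ hab => by
  have := mul_sub_le_sub_of_hasDerivAt (K := 0) hab (fun t _ => hw.hasDerivAt_sq t)
    (fun t ht => by linarith [hw.mul_deriv_nonneg h0 (le_trans ha ht.1)])
  linarith

lemma mul_deriv_ge (hw : IsDriftedAirySolution μ w) (h0 : w 0 = 0) {x₀ x : ℝ} (hx₀ : 0 < x₀)
    (hx : x₀ + 1 ≤ x) : exp (-(2 * |μ|)) * (x₀ * w x₀ ^ 2) ≤ w x * deriv w x := by
  have hκ : 0 ≤ x₀ * w x₀ ^ 2 := by positivity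
  have hgrow := mul_sub_le_sub_of_hasDerivAt (a := x - 1) (b := x)
    (K := exp (2 * μ * x + -(2 * |μ|)) * (x₀ * w x₀ ^ 2)) (by linarith)
    (fun t ht => hw.hasDerivAt_exp_mul_mul_deriv (by linarith [ht.1])) (fun t ht => by
      have hexp : exp (2 * μ * x + -(2 * |μ|)) ≤ exp (2 * μ * t) := by
        have h1 : μ * (x - t) ≤ |μ| * (x - t) :=
          mul_le_mul_of_nonneg_right (le_abs_self μ) (by linarith [ht.2])
        have h2 : |μ| * (x - t) ≤ |μ| :=
          mul_le_of_le_one_right (abs_nonneg μ) (by linarith [ht.1])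
        exact exp_le_exp.2 (by linarith)
      have hsq : w x₀ ^ 2 ≤ w t ^ 2 :=
        hw.monotoneOn_sq h0 hx₀.le (by linarith [ht.1] : (0:ℝ) ≤ t) (by linarith [ht.1])
      have hsol : x₀ * w x₀ ^ 2 ≤ deriv w t ^ 2 + t * w t ^ 2 := by
        nlinarith [sq_nonneg (deriv w t), sq_nonneg (w x₀), ht.1]
      exact mul_le_mul hexp hsol hκ (exp_pos _).le)
  have hprev := hw.mul_deriv_nonneg h0 (by linarith : (0:ℝ) ≤ x - 1)
  rw [exp_add] at hgrow
  have : exp (2 * μ * x) * (exp (-(2 * |μ|)) * (x₀ * w x₀ ^ 2))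
      ≤ exp (2 * μ * x) * (w x * deriv w x) := by
    nlinarith [mul_nonneg (exp_pos (2 * μ * (x - 1))).le hprev]
  exact le_of_mul_le_mul_left this (exp_pos _)

lemma eq_zero_of_bounded (hw : IsDriftedAirySolution μ w) (h0 : w 0 = 0) {M : ℝ}
    (hM : ∀ x ≥ (0:ℝ), |w x| ≤ M) {x : ℝ} (hx : 0 ≤ x) : w x = 0 := by
  by_contra hne
  have hxpos : 0 < x := lt_of_le_of_ne hx (by rintro rfl; exact hne h0)
  set κ := exp (-(2 * |μ|)) * (x * w x ^ 2)
  have hκ : 0 < κ := by positivity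
  set X := x + 1 + (M ^ 2 + 1) / (2 * κ)
  have hX : x + 1 ≤ X := le_add_of_nonneg_right (by positivity)
  have hgrow := mul_sub_le_sub_of_hasDerivAt (K := 2 * κ) hX (fun t _ => hw.hasDerivAt_sq t)
    (fun t ht => by linarith [hw.mul_deriv_ge h0 hxpos ht.1])
  have hlen : 2 * κ * (X - (x + 1)) = M ^ 2 + 1 := by
    simp only [X]
    field_simp
    ring
  have hbound : w X ^ 2 ≤ M ^ 2 := by
    rw [← sq_abs]
    exact pow_le_pow_left₀ (abs_nonneg _) (hM X (by linarith)) 2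
  nlinarith [sq_nonneg (w (x + 1))]

end IsDriftedAirySolution

theorem positive_decreasing_solution_unique_general (μ : ℝ) (f g : ℝ → ℝ)
    (hf : ContDiff ℝ 2 f) (hg : ContDiff ℝ 2 g)
    (hf_ode : ∀ x ≥ (0:ℝ), deriv (deriv f) x + 2 * μ * deriv f x - x * f x = 0)
    (hg_ode : ∀ x ≥ (0:ℝ), deriv (deriv g) x + 2 * μ * deriv g x - x * g x = 0)
    (hf_pos : ∀ x ≥ (0:ℝ), 0 < f x) (hg_pos : ∀ x ≥ (0:ℝ), 0 < g x)
    (hf_anti : AntitoneOn f (Set.Ici 0)) (hg_anti : AntitoneOn g (Set.Ici 0)) :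
    ∃ c > (0:ℝ), ∀ x ≥ (0:ℝ), g x = c * f x := by
  have hfs : IsDriftedAirySolution μ f := ⟨hf, hf_ode⟩
  have hgs : IsDriftedAirySolution μ g := ⟨hg, hg_ode⟩
  have hf0 := hf_pos 0 le_rfl
  set c := g 0 / f 0
  have hc : 0 < c := div_pos (hg_pos 0 le_rfl) hf0
  have h0 : g 0 - c * f 0 = 0 := by rw [div_mul_cancel₀ _ hf0.ne', sub_self]
  have hbdd : ∀ x ≥ (0:ℝ), |g x - c * f x| ≤ g 0 + c * f 0 := by
    intro x hx
    have hfx : f x ≤ f 0 := hf_anti self_mem_Ici hx hx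
    have hgx : g x ≤ g 0 := hg_anti self_mem_Ici hx hx
    rw [abs_le]
    constructor <;> nlinarith [hf_pos x hx, hg_pos x hx]
  refine ⟨c, hc, fun x hx => ?_⟩
  linarith [(hgs.sub_const_mul hfs c).eq_zero_of_bounded h0 hbdd hx]

/-- Up to a positive constant factor there is at most one positive
non-increasing solution of `w'' + 2μw' − xw = 0` on `[0,∞)`: if `f` and `g` are two
such solutions then `g = c·f` on `[0,∞)` for some `c > 0`. -/
theorem positive_decreasing_solution_unique (μ : ℝ) (hμ : 0 ≤ μ) (f g : ℝ → ℝ)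
    (hf : ContDiff ℝ 2 f) (hg : ContDiff ℝ 2 g)
    (hf_ode : ∀ x ≥ (0:ℝ), deriv (deriv f) x + 2 * μ * deriv f x - x * f x = 0)
    (hg_ode : ∀ x ≥ (0:ℝ), deriv (deriv g) x + 2 * μ * deriv g x - x * g x = 0)
    (hf_pos : ∀ x ≥ (0:ℝ), 0 < f x) (hg_pos : ∀ x ≥ (0:ℝ), 0 < g x)
    (hf_anti : AntitoneOn f (Set.Ici 0)) (hg_anti : AntitoneOn g (Set.Ici 0)) :
    ∃ c > (0:ℝ), ∀ x ≥ (0:ℝ), g x = c * f x :=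
  positive_decreasing_solution_unique_general μ f g hf hg hf_ode hg_ode hf_pos hg_pos hf_anti
    hg_anti
end

section
/- Let μ, γ > 0, set a := −γ²/(4μ³) and p(x) := γ/μ^{3/2} + √μ·x. Suppose f : ℝ → ℝ is twice continuously differentiable and satisfies Kummer's equation t·f''(t) + (1/2 − t)·f'(t) − a·f(t) = 0 for all t ≥ γ²/μ³. Then the function F(x) := e^{−γx/μ}·f(p(x)²) satisfies (1/2)·F''(x) − μx·F'(x) − γx·F(x) = 0 for all x ≥ 0. -/
/-!
Write `μ = s²` and `γ = c s³`, so that `p(x) = c + s x` and `e^{-γx/μ} = e^{-c s x}`. For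
`F = e^{-c s x} u(x)` one has `F'' = e^{-c s x} (u'' - 2 c s u' + c² s² u)`, and for
`u(x) = f(p(x)²)` the chain rule gives `u' = 2 s p f'(p²)`, `u'' = 2 s² f'(p²) + 4 s² p² f''(p²)`.
Substituting, `(1/2)F'' - μ x F' - γ x F` collapses to `2μ e^{-c s x}` times Kummer's expression
at `t = p(x)²`, and `t ≥ c² = γ²/μ³` once `x ≥ 0`.
-/

open Real

lemma hasDerivAt_exp_neg_mul_mul {u : ℝ → ℝ} {u' : ℝ} (k : ℝ) {x : ℝ} (hu : HasDerivAt u u' x) :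
    HasDerivAt (fun y => exp (-(k * y)) * u y) (exp (-(k * x)) * (u' - k * u x)) x := by
  have hE : HasDerivAt (fun y => exp (-(k * y))) (-k * exp (-(k * x))) x := by
    have := ((hasDerivAt_id x).const_mul k).fun_neg.exp
    simp only [id, mul_one] at this
    exact this.congr_deriv (mul_comm _ _)
  exact (hE.fun_mul hu).congr_deriv (by ring)

lemma deriv_exp_neg_mul_mul {u : ℝ → ℝ} (k : ℝ) (hu : Differentiable ℝ u) :
    deriv (fun y => exp (-(k * y)) * u y) = fun y => exp (-(k * y)) * (deriv u y - k * u y) :=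
  funext fun y => (hasDerivAt_exp_neg_mul_mul k (hu y).hasDerivAt).deriv

lemma deriv_deriv_exp_neg_mul_mul {u : ℝ → ℝ} (k : ℝ) (hu : Differentiable ℝ u)
    (hu' : Differentiable ℝ (deriv u)) (x : ℝ) :
    deriv (deriv fun y => exp (-(k * y)) * u y) x =
      exp (-(k * x)) * (deriv (deriv u) x - 2 * k * deriv u x + k ^ 2 * u x) := by
  rw [deriv_exp_neg_mul_mul k hu]
  have hv : HasDerivAt (fun y => deriv u y - k * u y) (deriv (deriv u) x - k * deriv u x) x :=
    (hu' x).hasDerivAt.sub ((hu x).hasDerivAt.const_mul k)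
  rw [(hasDerivAt_exp_neg_mul_mul k hv).deriv]
  ring

lemma hasDerivAt_comp_sq_affine {g : ℝ → ℝ} (c s : ℝ) {x : ℝ}
    (hg : DifferentiableAt ℝ g ((c + s * x) ^ 2)) :
    HasDerivAt (fun y => g ((c + s * y) ^ 2))
      (2 * s * (c + s * x) * deriv g ((c + s * x) ^ 2)) x := by
  have hp : HasDerivAt (fun y => (c + s * y) ^ 2) (2 * s * (c + s * x)) x := by
    have := (((hasDerivAt_id x).const_mul s).const_add c).fun_pow 2
    simp only [id, mul_one] at this
    exact this.congr_deriv (by ring)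
  exact (hg.hasDerivAt.comp x hp).congr_deriv (by ring)

lemma deriv_comp_sq_affine {g : ℝ → ℝ} (c s : ℝ) (hg : Differentiable ℝ g) :
    deriv (fun y => g ((c + s * y) ^ 2)) =
      fun y => 2 * s * (c + s * y) * deriv g ((c + s * y) ^ 2) :=
  funext fun _ => (hasDerivAt_comp_sq_affine c s (hg _)).deriv

lemma deriv_deriv_comp_sq_affine {g : ℝ → ℝ} (c s : ℝ) (hg : Differentiable ℝ g)
    (hg' : Differentiable ℝ (deriv g)) (x : ℝ) :
    deriv (deriv fun y => g ((c + s * y) ^ 2)) x =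
      2 * s ^ 2 * deriv g ((c + s * x) ^ 2)
        + 4 * s ^ 2 * (c + s * x) ^ 2 * deriv (deriv g) ((c + s * x) ^ 2) := by
  rw [deriv_comp_sq_affine c s hg]
  have hlin : HasDerivAt (fun y => 2 * s * (c + s * y)) (2 * s * s) x := by
    have := (((hasDerivAt_id x).const_mul s).const_add c).const_mul (2 * s)
    simpa only [id, mul_one] using this
  rw [(hlin.fun_mul (hasDerivAt_comp_sq_affine c s (hg' _))).deriv]
  ring

lemma killedOU_exp_mul_comp_sq_affine_eq_kummer {f : ℝ → ℝ} (c s : ℝ) (hf : Differentiable ℝ f)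
    (hf' : Differentiable ℝ (deriv f)) (x : ℝ) :
    (1 / 2) * deriv (deriv fun y => exp (-(c * s * y)) * f ((c + s * y) ^ 2)) x
        - s ^ 2 * x * deriv (fun y => exp (-(c * s * y)) * f ((c + s * y) ^ 2)) x
        - c * s ^ 3 * x * (exp (-(c * s * x)) * f ((c + s * x) ^ 2)) =
      2 * s ^ 2 * exp (-(c * s * x)) *
        ((c + s * x) ^ 2 * deriv (deriv f) ((c + s * x) ^ 2)
          + (1 / 2 - (c + s * x) ^ 2) * deriv f ((c + s * x) ^ 2)
          + c ^ 2 / 4 * f ((c + s * x) ^ 2)) := by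
  have hu : Differentiable ℝ fun y => f ((c + s * y) ^ 2) :=
    fun y => (hasDerivAt_comp_sq_affine c s (hf _)).differentiableAt
  have hu' : Differentiable ℝ (deriv fun y => f ((c + s * y) ^ 2)) := by
    rw [deriv_comp_sq_affine c s hf]
    fun_prop
  rw [deriv_deriv_exp_neg_mul_mul _ hu hu', deriv_exp_neg_mul_mul _ hu,
    deriv_deriv_comp_sq_affine c s hf hf', deriv_comp_sq_affine c s hf]
  ring

/-- If `f` solves Kummer's equation `t f'' + (1/2 − t) f' − a f = 0` with
`a = −γ²/(4μ³)` for all `t ≥ γ²/μ³`, then with `p(x) = γ/μ^{3/2} + √μ·x` the function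
`F(x) = e^{−γx/μ} f(p(x)²)` satisfies `(1/2)F'' − μx F' − γx F = 0` on `[0,∞)`. -/
theorem kummer_to_killed_OU (μ γ : ℝ) (hμ : 0 < μ) (hγ : 0 < γ) (f : ℝ → ℝ)
    (hf : ContDiff ℝ 2 f)
    (hode : ∀ t ≥ γ ^ 2 / μ ^ 3,
      t * deriv (deriv f) t + (1/2 - t) * deriv f t
        - (-(γ ^ 2 / (4 * μ ^ 3))) * f t = 0)
    (F : ℝ → ℝ)
    (hF : ∀ x, F x = Real.exp (-(γ * x / μ)) *
      f ((γ / μ ^ ((3:ℝ)/2) + Real.sqrt μ * x) ^ 2)) :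
    ∀ x ≥ (0:ℝ),
      (1/2) * deriv (deriv F) x - μ * x * deriv F x - γ * x * F x = 0 := by
  obtain ⟨s, hs, rfl⟩ : ∃ s, 0 < s ∧ μ = s ^ 2 := ⟨√μ, sqrt_pos.2 hμ, (sq_sqrt hμ.le).symm⟩
  obtain ⟨c, hc, rfl⟩ : ∃ c, 0 < c ∧ γ = c * s ^ 3 :=
    ⟨γ / s ^ 3, by positivity, by field_simp⟩
  have hs32 : (s ^ 2) ^ ((3 : ℝ) / 2) = s ^ 3 := by
    rw [← rpow_natCast, ← rpow_mul hs.le]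
    norm_num
  obtain rfl : F = fun y => exp (-(c * s * y)) * f ((c + s * y) ^ 2) := by
    funext y
    rw [hF, hs32, sqrt_sq hs.le]
    field_simp
  intro x hx
  have hc2 : (c * s ^ 3) ^ 2 / (s ^ 2) ^ 3 = c ^ 2 := by field_simp
  have ha : (c * s ^ 3) ^ 2 / (4 * (s ^ 2) ^ 3) = c ^ 2 / 4 := by field_simp
  have hkummer := hode ((c + s * x) ^ 2) (by rw [hc2]; nlinarith [mul_nonneg hs.le hx])
  rw [ha] at hkummer
  rw [killedOU_exp_mul_comp_sq_affine_eq_kummer c s (hf.differentiable two_ne_zero)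
    hf.differentiable_deriv_two]
  linear_combination (2 * s ^ 2 * exp (-(c * s * x))) * hkummer
end

section
/- Let μ, γ > 0 and let u : [0,∞) → ℝ be twice continuously differentiable with (1/2)·u''(x) − μx·u'(x) − γx·u(x) = 0 for all x ≥ 0, u(0) > 0, and u(x) → 0 as x → ∞. Then u(x) > 0 for all x ≥ 0, u''(x) > 0 for all x > 0, and u'(x) < 0 for all x > 0; in particular u is strictly decreasing on [0,∞). -/
/-!
Write `w = μu' + γu`, so that the equation reads `u'' = 2xw`. With the integrating factor
`e^{-μx²}` it becomes `(e^{-μx²}u')' = 2γx e^{-μx²}u` and `(e^{-μx²}w)' = γ e^{-μx²}u'`.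

Since `u → 0`, a negative value of `u` would produce an interior negative minimum, where
`u'' = 2γxu < 0`; hence `u ≥ 0`. Then `e^{-μx²}u'` is nondecreasing, so `u' ≤ 0`: otherwise `u'`
stays above a positive constant and `u` cannot tend to `0`. Likewise `e^{-μx²}w` is nonincreasing,
so `w ≥ 0`. Now `(e^{γx/μ}u)' = e^{γx/μ}w/μ ≥ 0` gives `u > 0`, which makes the first weighted
derivative strictly increasing, so `u' < 0`; this in turn makes the second strictly decreasing, so
`w > 0` and `u'' = 2xw > 0`.
-/

open Real Filter Set Topology

theorem IsLocalMin.deriv_deriv_nonneg {f : ℝ → ℝ} {c : ℝ} (h : IsLocalMin f c)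
    (hc : ContinuousAt f c) : 0 ≤ deriv (deriv f) c := by
  by_contra! hneg
  have hmax : IsLocalMax f c := isLocalMax_of_deriv_deriv_neg hneg h.deriv_eq_zero hc
  have hconst : f =ᶠ[𝓝 c] fun _ => f c := by
    filter_upwards [h, hmax] with x hmin hmax using le_antisymm hmax hmin
  have : deriv (deriv f) c = 0 := by
    rw [hconst.deriv.deriv_eq]
    simp
  exact hneg.ne this

theorem exists_isMinOn_Ici_of_tendsto {f : ℝ → ℝ} {a x₀ L : ℝ} (hf : ContinuousOn f (Ici a))
    (hlim : Tendsto f atTop (𝓝 L)) (hx₀ : a ≤ x₀) (hfx₀ : f x₀ < L) :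
    ∃ c ∈ Ici a, IsMinOn f (Ici a) c := by
  refine hf.exists_isMinOn' isClosed_Ici hx₀ ?_
  rw [cocompact_eq_atBot_atTop, inf_sup_right, (disjoint_atBot_principal_Ici a).eq_bot,
    bot_sup_eq]
  exact ((hlim.eventually (eventually_gt_nhds hfx₀)).mono fun _ h => h.le).filter_mono inf_le_left

theorem tendsto_atTop_of_le_deriv {f : ℝ → ℝ} {a c : ℝ} (hf : Differentiable ℝ f) (hc : 0 < c)
    (h : ∀ x ≥ a, c ≤ deriv f x) : Tendsto f atTop atTop := by
  have hlin : ∀ x ≥ a, c * (x - a) + f a ≤ f x := fun x hx => by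
    have := (convex_Ici a).mul_sub_le_image_sub_of_le_deriv hf.continuous.continuousOn
      hf.differentiableOn (fun y hy => h y (interior_subset hy)) a self_mem_Ici x hx hx
    linarith
  refine tendsto_atTop_mono' atTop (eventually_atTop.mpr ⟨a, hlin⟩) ?_
  exact tendsto_atTop_add_const_right _ _
    ((tendsto_atTop_add_const_right _ _ tendsto_id).const_mul_atTop hc)

theorem hasDerivAt_exp_mul {φ φ' f : ℝ → ℝ} {x : ℝ} (hφ : HasDerivAt φ (φ' x) x)
    (hf : DifferentiableAt ℝ f x) :
    HasDerivAt (fun y => exp (φ y) * f y) (exp (φ x) * (deriv f x + φ' x * f x)) x :=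
  (hφ.exp.mul hf.hasDerivAt).congr_deriv (by ring)

theorem monotoneOn_exp_mul {φ φ' f : ℝ → ℝ} {s : Set ℝ} (hs : Convex ℝ s)
    (hφ : ∀ x, HasDerivAt φ (φ' x) x) (hf : Differentiable ℝ f)
    (h : ∀ x ∈ interior s, 0 ≤ deriv f x + φ' x * f x) :
    MonotoneOn (fun x => exp (φ x) * f x) s := by
  have hd x := hasDerivAt_exp_mul (hφ x) (hf x)
  have hdiff : Differentiable ℝ fun x => exp (φ x) * f x := fun x => (hd x).differentiableAt
  exact monotoneOn_of_deriv_nonneg hs hdiff.continuous.continuousOn hdiff.differentiableOn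
    fun x hx => (hd x).deriv ▸ mul_nonneg (exp_pos _).le (h x hx)

theorem strictMonoOn_exp_mul {φ φ' f : ℝ → ℝ} {s : Set ℝ} (hs : Convex ℝ s)
    (hφ : ∀ x, HasDerivAt φ (φ' x) x) (hf : Differentiable ℝ f)
    (h : ∀ x ∈ interior s, 0 < deriv f x + φ' x * f x) :
    StrictMonoOn (fun x => exp (φ x) * f x) s := by
  have hd x := hasDerivAt_exp_mul (hφ x) (hf x)
  have hdiff : Differentiable ℝ fun x => exp (φ x) * f x := fun x => (hd x).differentiableAt
  exact strictMonoOn_of_deriv_pos hs hdiff.continuous.continuousOn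
    fun x hx => (hd x).deriv ▸ mul_pos (exp_pos _) (h x hx)

theorem le_of_monotoneOn_exp_mul {φ f : ℝ → ℝ} {s : Set ℝ}
    (hmono : MonotoneOn (fun x => exp (φ x) * f x) s) (hφ : AntitoneOn φ s) {x₁ x : ℝ}
    (hx₁ : x₁ ∈ s) (hx : x ∈ s) (hle : x₁ ≤ x) (hf : 0 ≤ f x₁) : f x₁ ≤ f x := by
  have hexp : exp (φ x) ≤ exp (φ x₁) := exp_le_exp.mpr (hφ hx₁ hx hle)
  refine le_of_mul_le_mul_left ?_ (exp_pos (φ x))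
  calc exp (φ x) * f x₁ ≤ exp (φ x₁) * f x₁ := mul_le_mul_of_nonneg_right hexp hf
    _ ≤ exp (φ x) * f x := hmono hx₁ hx hle

theorem neg_of_strictMonoOn_exp_mul {φ f : ℝ → ℝ} {a : ℝ}
    (hmono : StrictMonoOn (fun x => exp (φ x) * f x) (Ici a)) (hf : ∀ x ≥ a, f x ≤ 0) :
    ∀ x ≥ a, f x < 0 := by
  intro x hx
  have hx1 : a ≤ x + 1 := by linarith
  have hlt := hmono hx hx1 (lt_add_one x)
  exact neg_of_mul_neg_right (hlt.trans_le (mul_nonpos_of_nonneg_of_nonpos (exp_pos _).le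
    (hf _ hx1))) (exp_pos _).le

theorem hasDerivAt_neg_mul_sq (μ x : ℝ) : HasDerivAt (fun y => -(μ * y ^ 2)) (-(2 * μ * x)) x :=
  (((hasDerivAt_pow 2 x).const_mul μ).neg).congr_deriv (by ring)

theorem antitoneOn_neg_mul_sq {μ : ℝ} (hμ : 0 ≤ μ) : AntitoneOn (fun x => -(μ * x ^ 2)) (Ici 0) :=
  fun _ ha _ _ hab => neg_le_neg (mul_le_mul_of_nonneg_left (pow_le_pow_left₀ ha hab 2) hμ)

structure IsKilledOUSolution (μ γ : ℝ) (u : ℝ → ℝ) : Prop where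
  differentiable : Differentiable ℝ u
  differentiable_deriv : Differentiable ℝ (deriv u)
  ode : ∀ x ≥ 0, deriv (deriv u) x = 2 * x * (μ * deriv u x + γ * u x)

namespace IsKilledOUSolution

variable {μ γ : ℝ} {u : ℝ → ℝ}

theorem nonneg (hu : IsKilledOUSolution μ γ u) (hγ : 0 < γ) (h0 : 0 ≤ u 0)
    (hlim : Tendsto u atTop (𝓝 0)) : ∀ x ≥ 0, 0 ≤ u x := by
  intro x₁ hx₁
  by_contra! hneg
  obtain ⟨c, hc, hmin⟩ :=
    exists_isMinOn_Ici_of_tendsto hu.differentiable.continuous.continuousOn hlim hx₁ hneg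
  have huc : u c < 0 := (hmin hx₁).trans_lt hneg
  have hc0 : 0 < c := lt_of_le_of_ne hc (by rintro rfl; linarith)
  have hloc : IsLocalMin u c := hmin.isLocalMin (Ici_mem_nhds hc0)
  have hconvex := hloc.deriv_deriv_nonneg hu.differentiable.continuous.continuousAt
  rw [hu.ode c hc, hloc.deriv_eq_zero] at hconvex
  nlinarith [mul_pos hc0 hγ]

theorem deriv_deriv_add_neg_mul_deriv (hu : IsKilledOUSolution μ γ u) {x : ℝ} (hx : 0 ≤ x) :
    deriv (deriv u) x + -(2 * μ * x) * deriv u x = 2 * γ * x * u x := by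
  rw [hu.ode x hx]
  ring

theorem monotoneOn_gaussian_mul_deriv (hu : IsKilledOUSolution μ γ u) (hγ : 0 ≤ γ)
    (hnonneg : ∀ x ≥ 0, 0 ≤ u x) :
    MonotoneOn (fun x => exp (-(μ * x ^ 2)) * deriv u x) (Ici 0) := by
  refine monotoneOn_exp_mul (convex_Ici 0) (hasDerivAt_neg_mul_sq μ) hu.differentiable_deriv
    fun x hx => ?_
  rw [interior_Ici] at hx
  rw [hu.deriv_deriv_add_neg_mul_deriv hx.le]
  exact mul_nonneg (mul_nonneg (mul_nonneg zero_le_two hγ) hx.le) (hnonneg x hx.le)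

theorem strictMonoOn_gaussian_mul_deriv (hu : IsKilledOUSolution μ γ u) (hγ : 0 < γ)
    (hpos : ∀ x > 0, 0 < u x) :
    StrictMonoOn (fun x => exp (-(μ * x ^ 2)) * deriv u x) (Ici 0) := by
  refine strictMonoOn_exp_mul (convex_Ici 0) (hasDerivAt_neg_mul_sq μ) hu.differentiable_deriv
    fun x hx => ?_
  rw [interior_Ici] at hx
  rw [hu.deriv_deriv_add_neg_mul_deriv hx.le]
  exact mul_pos (mul_pos (mul_pos zero_lt_two hγ) hx) (hpos x hx)

theorem differentiable_neg_mul_deriv_add_mul (hu : IsKilledOUSolution μ γ u) :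
    Differentiable ℝ fun x => -(μ * deriv u x + γ * u x) :=
  ((hu.differentiable_deriv.const_mul μ).add (hu.differentiable.const_mul γ)).neg

theorem deriv_neg_mul_deriv_add_mul (hu : IsKilledOUSolution μ γ u) {x : ℝ} (hx : 0 ≤ x) :
    deriv (fun x => -(μ * deriv u x + γ * u x)) x + -(2 * μ * x) * -(μ * deriv u x + γ * u x)
      = -(γ * deriv u x) := by
  have hd : HasDerivAt (fun x => -(μ * deriv u x + γ * u x))
      (-(μ * deriv (deriv u) x + γ * deriv u x)) x :=
    (((hu.differentiable_deriv x).hasDerivAt.const_mul μ).add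
      ((hu.differentiable x).hasDerivAt.const_mul γ)).neg
  rw [hd.deriv, hu.ode x hx]
  ring

theorem monotoneOn_gaussian_mul_neg_mul_deriv_add_mul (hu : IsKilledOUSolution μ γ u)
    (hγ : 0 ≤ γ) (hderiv : ∀ x ≥ 0, deriv u x ≤ 0) :
    MonotoneOn (fun x => exp (-(μ * x ^ 2)) * -(μ * deriv u x + γ * u x)) (Ici 0) := by
  refine monotoneOn_exp_mul (convex_Ici 0) (hasDerivAt_neg_mul_sq μ)
    hu.differentiable_neg_mul_deriv_add_mul fun x hx => ?_
  rw [interior_Ici] at hx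
  rw [hu.deriv_neg_mul_deriv_add_mul hx.le, neg_nonneg]
  exact mul_nonpos_of_nonneg_of_nonpos hγ (hderiv x hx.le)

theorem strictMonoOn_gaussian_mul_neg_mul_deriv_add_mul (hu : IsKilledOUSolution μ γ u)
    (hγ : 0 < γ) (hderiv : ∀ x > 0, deriv u x < 0) :
    StrictMonoOn (fun x => exp (-(μ * x ^ 2)) * -(μ * deriv u x + γ * u x)) (Ici 0) := by
  refine strictMonoOn_exp_mul (convex_Ici 0) (hasDerivAt_neg_mul_sq μ)
    hu.differentiable_neg_mul_deriv_add_mul fun x hx => ?_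
  rw [interior_Ici] at hx
  rw [hu.deriv_neg_mul_deriv_add_mul hx.le, neg_pos]
  exact mul_neg_of_pos_of_neg hγ (hderiv x hx)

theorem deriv_nonpos (hu : IsKilledOUSolution μ γ u) (hμ : 0 ≤ μ) (hγ : 0 ≤ γ)
    (hnonneg : ∀ x ≥ 0, 0 ≤ u x) (hlim : Tendsto u atTop (𝓝 0)) : ∀ x ≥ 0, deriv u x ≤ 0 := by
  intro x₁ hx₁
  by_contra! hpos
  have hgrow : ∀ x ≥ x₁, deriv u x₁ ≤ deriv u x := fun x hx =>
    le_of_monotoneOn_exp_mul (hu.monotoneOn_gaussian_mul_deriv hγ hnonneg)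
      (antitoneOn_neg_mul_sq hμ) hx₁ (hx₁.trans hx) hx hpos.le
  exact not_tendsto_nhds_of_tendsto_atTop
    (tendsto_atTop_of_le_deriv hu.differentiable hpos hgrow) 0 hlim

theorem mul_deriv_add_mul_nonneg (hu : IsKilledOUSolution μ γ u) (hμ : 0 < μ) (hγ : 0 ≤ γ)
    (hnonneg : ∀ x ≥ 0, 0 ≤ u x) (hderiv : ∀ x ≥ 0, deriv u x ≤ 0)
    (hlim : Tendsto u atTop (𝓝 0)) : ∀ x ≥ 0, 0 ≤ μ * deriv u x + γ * u x := by
  intro x₁ hx₁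
  by_contra! hneg
  set c := -(μ * deriv u x₁ + γ * u x₁)
  have hgrow : ∀ x ≥ x₁, c ≤ -(μ * deriv u x + γ * u x) := fun x hx =>
    le_of_monotoneOn_exp_mul (hu.monotoneOn_gaussian_mul_neg_mul_deriv_add_mul hγ hderiv)
      (antitoneOn_neg_mul_sq hμ.le) hx₁ (hx₁.trans hx) hx (by linarith)
  have hslope : ∀ x ≥ x₁, c / μ ≤ deriv (fun x => -u x) x := fun x hx => by
    rw [deriv.fun_neg, div_le_iff₀ hμ]
    nlinarith [hgrow x hx, hnonneg x (hx₁.trans hx)]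
  exact not_tendsto_nhds_of_tendsto_atTop
    (tendsto_atTop_of_le_deriv hu.differentiable.fun_neg (div_pos (by linarith) hμ) hslope) 0
    (by simpa using hlim.neg)

theorem pos (hu : IsKilledOUSolution μ γ u) (hμ : 0 < μ) (h0 : 0 < u 0)
    (hw : ∀ x ≥ 0, 0 ≤ μ * deriv u x + γ * u x) : ∀ x ≥ 0, 0 < u x := by
  have hmono : MonotoneOn (fun x => exp (γ / μ * x) * u x) (Ici 0) := by
    refine monotoneOn_exp_mul (convex_Ici 0) (fun x => hasDerivAt_const_mul (γ / μ))
      hu.differentiable fun x hx => ?_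
    rw [interior_Ici] at hx
    rw [show deriv u x + γ / μ * u x = (μ * deriv u x + γ * u x) / μ by field_simp]
    exact div_nonneg (hw x hx.le) hμ.le
  intro x hx
  have h := hmono self_mem_Ici hx hx
  simp only [mul_zero, exp_zero, one_mul] at h
  exact pos_of_mul_pos_right (h0.trans_le h) (exp_pos _).le

theorem deriv_lt_zero (hu : IsKilledOUSolution μ γ u) (hγ : 0 < γ) (hpos : ∀ x ≥ 0, 0 < u x)
    (hderiv : ∀ x ≥ 0, deriv u x ≤ 0) : ∀ x ≥ 0, deriv u x < 0 :=
  neg_of_strictMonoOn_exp_mul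
    (hu.strictMonoOn_gaussian_mul_deriv hγ fun x hx => hpos x hx.le) hderiv

theorem mul_deriv_add_mul_pos (hu : IsKilledOUSolution μ γ u) (hγ : 0 < γ)
    (hderiv : ∀ x ≥ 0, deriv u x < 0) (hw : ∀ x ≥ 0, 0 ≤ μ * deriv u x + γ * u x) :
    ∀ x ≥ 0, 0 < μ * deriv u x + γ * u x := fun x hx =>
  neg_neg_iff_pos.mp <| neg_of_strictMonoOn_exp_mul
    (hu.strictMonoOn_gaussian_mul_neg_mul_deriv_add_mul hγ fun x hx => hderiv x hx.le)
    (fun x hx => neg_nonpos.mpr (hw x hx)) x hx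

end IsKilledOUSolution

/-- Any twice continuously differentiable solution of
`(1/2)u'' − μxu' − γxu = 0` on `[0,∞)` with `u(0) > 0` and `u(x) → 0` at infinity is
positive on `[0,∞)`, convex (`u'' > 0`) and strictly decreasing (`u' < 0`) on `(0,∞)`;
in particular `u` is strictly decreasing on `[0,∞)`. -/
theorem killed_OU_decreasing_solution (μ γ : ℝ) (hμ : 0 < μ) (hγ : 0 < γ)
    (u : ℝ → ℝ) (hu : ContDiff ℝ 2 u)
    (hode : ∀ x ≥ (0:ℝ),
      (1/2) * deriv (deriv u) x - μ * x * deriv u x - γ * x * u x = 0)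
    (h0 : 0 < u 0) (hlim : Tendsto u atTop (nhds 0)) :
    (∀ x ≥ (0:ℝ), 0 < u x) ∧
    (∀ x > (0:ℝ), 0 < deriv (deriv u) x) ∧
    (∀ x > (0:ℝ), deriv u x < 0) ∧
    StrictAntiOn u (Set.Ici 0) := by
  have hsol : IsKilledOUSolution μ γ u :=
    ⟨hu.differentiable two_ne_zero, (hu.iterate_deriv' 1 1).differentiable one_ne_zero,
      fun x hx => by linarith [hode x hx]⟩
  have hnonneg := hsol.nonneg hγ h0.le hlim
  have hderiv := hsol.deriv_nonpos hμ.le hγ.le hnonneg hlim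
  have hw := hsol.mul_deriv_add_mul_nonneg hμ hγ.le hnonneg hderiv hlim
  have hpos := hsol.pos hμ h0 hw
  have hderiv' := hsol.deriv_lt_zero hγ hpos hderiv
  have hw' := hsol.mul_deriv_add_mul_pos hγ hderiv' hw
  refine ⟨hpos, fun x hx => ?_, fun x hx => hderiv' x hx.le, ?_⟩
  · rw [hsol.ode x hx.le]
    exact mul_pos (mul_pos zero_lt_two hx) (hw' x hx.le)
  · exact strictAntiOn_of_deriv_neg (convex_Ici 0) hsol.differentiable.continuous.continuousOn
      fun x hx => hderiv' x (interior_subset hx)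
end

section
/- Let μ, γ > 0 and let Φ, Ψ : [0,∞) → ℝ be twice continuously differentiable with (1/2)·Φ''(x) = (γx − μ)·Φ(x) − μx·Φ'(x) and (1/2)·Ψ''(x) = (γx − μ)·Ψ(x) − μx·Ψ'(x) for all x ≥ 0. Set φ(x) := e^{μx²}Φ(x) and ψ(x) := e^{μx²}Ψ(x), and assume: (a) φ(x)Ψ'(x) − ψ(x)Φ'(x) = 1 for all x ≥ 0; (b) Ψ'(0) = 0; (c) Φ(y) → 0, y·Φ(y) → 0 and y·Φ'(y) → 0 as y → ∞; (d) the functions y ↦ Φ(y) and y ↦ y²·Φ(y) are Lebesgue integrable on [0,∞). Then for every x ≥ 0: φ(x)·∫₀ˣ 2γy²·Ψ(y) dy + ψ(x)·∫ₓ^∞ 2γy²·Φ(y) dy = x − μ/γ + φ(x)·Ψ(0). -/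
open Real Filter Set MeasureTheory Topology

/-! For a solution `w` of `(1/2) w'' = (γy − μ) w − μ y w'`, the integrand `2γy² w` is an exact
derivative: it is the derivative of `y w' − w + 2μy² w − (μ/γ)(w' + 2μ y w)`. So both integrals
are boundary terms. At infinity the boundary term of `Φ` tends to a limit (its derivative is
integrable), and the decay of `Φ` identifies that limit with `2μ · lim y² Φ(y)`, which vanishes
because `y² Φ` is integrable. At `0` the boundary term of `Ψ` is `−Ψ(0)` since `Ψ'(0) = 0`.
What is left at `x` combines, through `φ Ψ = ψ Φ` and the Wronskian identity, into `x − μ/γ`. -/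

noncomputable def killingPrimitive (μ γ : ℝ) (w : ℝ → ℝ) (y : ℝ) : ℝ :=
  y * deriv w y - w y + 2 * μ * y ^ 2 * w y - μ / γ * (deriv w y + 2 * μ * y * w y)

section
variable {μ γ : ℝ} {w : ℝ → ℝ}

theorem hasDerivAt_killingPrimitive (hγ : γ ≠ 0) {y : ℝ} (hw : DifferentiableAt ℝ w y)
    (hw' : DifferentiableAt ℝ (deriv w) y)
    (hode : (1 / 2) * deriv (deriv w) y = (γ * y - μ) * w y - μ * y * deriv w y) :
    HasDerivAt (killingPrimitive μ γ w) (2 * γ * y ^ 2 * w y) y := by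
  have hid := hasDerivAt_id' y
  have h := ((hid.fun_mul hw'.hasDerivAt).fun_sub hw.hasDerivAt).fun_add
      (((hid.fun_pow 2).const_mul (2 * μ)).fun_mul hw.hasDerivAt) |>.fun_sub
      ((hw'.hasDerivAt.fun_add ((hid.const_mul (2 * μ)).fun_mul hw.hasDerivAt)).const_mul (μ / γ))
  refine h.congr_deriv ?_
  field_simp
  linear_combination (2 * y * γ - 2 * μ) * hode

theorem eq_zero_of_tendsto_of_integrableOn_Ici {E : Type*} [NormedAddCommGroup E] {f : ℝ → E}
    {a : ℝ} {c : E} (hf : IntegrableOn f (Ici a)) (h : Tendsto f atTop (𝓝 c)) : c = 0 := by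
  refine IntegrableAtFilter.eq_zero_of_tendsto ⟨Ici a, Ici_mem_atTop a, hf⟩ (fun s hs => ?_) h
  obtain ⟨b, hb⟩ := mem_atTop_sets.1 hs
  exact top_le_iff.1 (volume_Ici (a := b) ▸ measure_mono hb)

theorem tendsto_zero_of_tendsto_id_mul {f : ℝ → ℝ} (h : Tendsto (fun y => y * f y) atTop (𝓝 0)) :
    Tendsto f atTop (𝓝 0) := by
  have := tendsto_inv_atTop_zero.mul h
  rw [zero_mul] at this
  refine this.congr' ?_
  filter_upwards [eventually_ne_atTop 0] with y hy
  field_simp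

theorem intervalIntegral_eq_killingPrimitive_sub (hγ : γ ≠ 0) (hw : ContDiff ℝ 2 w) {a b : ℝ}
    (hab : a ≤ b)
    (hode : ∀ y ∈ Icc a b, (1 / 2) * deriv (deriv w) y = (γ * y - μ) * w y - μ * y * deriv w y) :
    ∫ y in a..b, 2 * γ * y ^ 2 * w y = killingPrimitive μ γ w b - killingPrimitive μ γ w a := by
  have hw_cont : Continuous w := hw.continuous
  refine intervalIntegral.integral_eq_sub_of_hasDerivAt (fun y hy => ?_)
    (Continuous.intervalIntegrable (by fun_prop) a b)
  rw [uIcc_of_le hab] at hy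
  exact hasDerivAt_killingPrimitive hγ (hw.differentiable two_ne_zero y)
    (hw.differentiable_deriv_two y) (hode y hy)

theorem integral_Ioi_eq_neg_killingPrimitive (hμ : μ ≠ 0) (hγ : γ ≠ 0) (hw : ContDiff ℝ 2 w)
    (hode : ∀ y ≥ (0:ℝ), (1 / 2) * deriv (deriv w) y = (γ * y - μ) * w y - μ * y * deriv w y)
    (hw_lim : Tendsto w atTop (𝓝 0)) (hw_lim' : Tendsto (fun y => y * w y) atTop (𝓝 0))
    (hw'_lim : Tendsto (fun y => y * deriv w y) atTop (𝓝 0))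
    (hw_int : IntegrableOn (fun y => y ^ 2 * w y) (Ici 0)) {x : ℝ} (hx : 0 ≤ x) :
    ∫ y in Ioi x, 2 * γ * y ^ 2 * w y = - killingPrimitive μ γ w x := by
  have hderiv : ∀ y ∈ Ici (0:ℝ), HasDerivAt (killingPrimitive μ γ w) (2 * γ * y ^ 2 * w y) y :=
    fun y hy => hasDerivAt_killingPrimitive hγ (hw.differentiable two_ne_zero y)
      (hw.differentiable_deriv_two y) (hode y hy)
  have hint : IntegrableOn (fun y => 2 * γ * y ^ 2 * w y) (Ici 0) :=
    IntegrableOn.congr_fun (hw_int.const_mul (2 * γ)) (fun y _ => by ring) measurableSet_Ici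
  obtain ⟨L, hF⟩ : ∃ L, Tendsto (killingPrimitive μ γ w) atTop (𝓝 L) := ⟨_,
    tendsto_limUnder_of_hasDerivAt_of_integrableOn_Ioi
      (fun y hy => hderiv y (Ioi_subset_Ici_self hy)) (hint.mono_set Ioi_subset_Ici_self)⟩
  have hsq : Tendsto (fun y => y ^ 2 * w y) atTop (𝓝 (L / (2 * μ))) := by
    have h := (((hF.sub hw'_lim).add hw_lim).add
      (((tendsto_zero_of_tendsto_id_mul hw'_lim).add (hw_lim'.const_mul (2 * μ))).const_mul
        (μ / γ))).div_const (2 * μ)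
    simp only [sub_zero, add_zero, mul_zero] at h
    refine h.congr fun y => ?_
    simp only [killingPrimitive]
    field_simp
    ring
  have hL : L = 0 := by
    simpa [hμ] using eq_zero_of_tendsto_of_integrableOn_Ici hw_int hsq
  rw [integral_Ioi_of_hasDerivAt_of_tendsto' (fun y hy => hderiv y (hx.trans hy))
    (hint.mono_set (Ioi_subset_Ici hx)) (hL ▸ hF), zero_sub]

end

theorem OU_expected_killing_position_identity_general (μ γ : ℝ) (hμ : 0 < μ) (hγ : 0 < γ)
    (Φ Ψ : ℝ → ℝ) (hΦ : ContDiff ℝ 2 Φ) (hΨ : ContDiff ℝ 2 Ψ)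
    (hΦ_ode : ∀ x ≥ (0:ℝ),
      (1/2) * deriv (deriv Φ) x = (γ * x - μ) * Φ x - μ * x * deriv Φ x)
    (hΨ_ode : ∀ x ≥ (0:ℝ),
      (1/2) * deriv (deriv Ψ) x = (γ * x - μ) * Ψ x - μ * x * deriv Ψ x)
    (φ ψ : ℝ → ℝ)
    (hφ : ∀ x, φ x = Real.exp (μ * x ^ 2) * Φ x)
    (hψ : ∀ x, ψ x = Real.exp (μ * x ^ 2) * Ψ x)
    (hwr : ∀ x ≥ (0:ℝ), φ x * deriv Ψ x - ψ x * deriv Φ x = 1)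
    (hΨ'0 : deriv Ψ 0 = 0)
    (hΦ_lim : Tendsto Φ atTop (nhds 0))
    (hΦ_lim' : Tendsto (fun y => y * Φ y) atTop (nhds 0))
    (hΦ'_lim : Tendsto (fun y => y * deriv Φ y) atTop (nhds 0))
    (hΦ_int2 : IntegrableOn (fun y => y ^ 2 * Φ y) (Set.Ici 0)) :
    ∀ x ≥ (0:ℝ),
      φ x * (∫ y in (0:ℝ)..x, 2 * γ * y ^ 2 * Ψ y)
        + ψ x * (∫ y in Set.Ioi x, 2 * γ * y ^ 2 * Φ y)
      = x - μ / γ + φ x * Ψ 0 := by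
  intro x hx
  have hΨ_eq : ∫ y in (0:ℝ)..x, 2 * γ * y ^ 2 * Ψ y = killingPrimitive μ γ Ψ x + Ψ 0 := by
    rw [intervalIntegral_eq_killingPrimitive_sub hγ.ne' hΨ hx fun y hy => hΨ_ode y hy.1]
    simp [killingPrimitive, hΨ'0]
  have hΦ_eq : ∫ y in Ioi x, 2 * γ * y ^ 2 * Φ y = - killingPrimitive μ γ Φ x :=
    integral_Ioi_eq_neg_killingPrimitive hμ.ne' hγ.ne' hΦ hΦ_ode hΦ_lim hΦ_lim' hΦ'_lim
      hΦ_int2 hx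
  have hcross : φ x * Ψ x = ψ x * Φ x := by rw [hφ, hψ]; ring
  rw [hΨ_eq, hΦ_eq]
  simp only [killingPrimitive]
  linear_combination (x - μ / γ) * hwr x hx + (2 * μ * x ^ 2 - 2 * μ ^ 2 * x / γ - 1) * hcross

/-- Integration-by-parts identity for the expected killing position of the
reflecting Ornstein-Uhlenbeck process with drift `−μx` killed at rate `γx`.  Here `Φ, Ψ`
solve `(1/2)w'' = (γx−μ)w − μxw'` on `[0,∞)`, `φ = e^{μx²}Φ`, `ψ = e^{μx²}Ψ`, the
Wronskian identity (a) holds, `Ψ'(0) = 0` (b), `Φ` decays suitably (c) and `Φ`, `y²Φ` are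
integrable (d).  Then `φ(x)∫₀ˣ 2γy²Ψ + ψ(x)∫ₓ^∞ 2γy²Φ = x − μ/γ + φ(x)Ψ(0)`. -/
theorem OU_expected_killing_position_identity (μ γ : ℝ) (hμ : 0 < μ) (hγ : 0 < γ)
    (Φ Ψ : ℝ → ℝ) (hΦ : ContDiff ℝ 2 Φ) (hΨ : ContDiff ℝ 2 Ψ)
    (hΦ_ode : ∀ x ≥ (0:ℝ),
      (1/2) * deriv (deriv Φ) x = (γ * x - μ) * Φ x - μ * x * deriv Φ x)
    (hΨ_ode : ∀ x ≥ (0:ℝ),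
      (1/2) * deriv (deriv Ψ) x = (γ * x - μ) * Ψ x - μ * x * deriv Ψ x)
    (φ ψ : ℝ → ℝ)
    (hφ : ∀ x, φ x = Real.exp (μ * x ^ 2) * Φ x)
    (hψ : ∀ x, ψ x = Real.exp (μ * x ^ 2) * Ψ x)
    (hwr : ∀ x ≥ (0:ℝ), φ x * deriv Ψ x - ψ x * deriv Φ x = 1)
    (hΨ'0 : deriv Ψ 0 = 0)
    (hΦ_lim : Tendsto Φ atTop (nhds 0))
    (hΦ_lim' : Tendsto (fun y => y * Φ y) atTop (nhds 0))
    (hΦ'_lim : Tendsto (fun y => y * deriv Φ y) atTop (nhds 0))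
    (hΦ_int : IntegrableOn Φ (Set.Ici 0))
    (hΦ_int2 : IntegrableOn (fun y => y ^ 2 * Φ y) (Set.Ici 0)) :
    ∀ x ≥ (0:ℝ),
      φ x * (∫ y in (0:ℝ)..x, 2 * γ * y ^ 2 * Ψ y)
        + ψ x * (∫ y in Set.Ioi x, 2 * γ * y ^ 2 * Φ y)
      = x - μ / γ + φ x * Ψ 0 :=
  OU_expected_killing_position_identity_general μ γ hμ hγ Φ Ψ hΦ hΨ hΦ_ode hΨ_ode φ ψ hφ hψ hwr hΨ'0
    hΦ_lim hΦ_lim' hΦ'_lim hΦ_int2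
end

section
/- Let μ, γ > 0 and suppose f, g : [0,∞) → ℝ are twice continuously differentiable, satisfy (1/2)·w''(x) + μx·w'(x) − γx·w(x) = 0 for all x ≥ 0, and are positive and non-increasing on [0,∞). Then there exists a constant c > 0 with g(x) = c·f(x) for all x ≥ 0. -/
/-!
If `f` and `g` both solve `w'' = -2μx w' + 2γx w`, Abel's identity gives
`f g' - g f' = W₀ e^{-μx²}`. Were `W₀ > 0`, then, `g` being positive and non-increasing,
`-f' ≥ C e^{-μx²}` for some `C > 0`; integrating over `[x, x + 1/x]` gives
`f(x) ≳ e^{-μx²}/x`, so `A = e^{μx²} f'` has `A' = 2γx e^{μx²} f ≥ const > 0` and eventually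
becomes positive, contradicting `f' < 0`. By symmetry `W₀ = 0`, so `g / f` is constant.
-/

open Real Set

noncomputable def wronskian (f g : ℝ → ℝ) (x : ℝ) : ℝ := f x * deriv g x - g x * deriv f x

theorem eq_of_forall_hasDerivAt_zero {F : ℝ → ℝ} {a x : ℝ}
    (hF : ∀ y ≥ a, HasDerivAt F 0 y) (hx : a ≤ x) : F x = F a :=
  constant_of_has_deriv_right_zero (fun y hy => (hF y hy.1).continuousAt.continuousWithinAt)
    (fun y hy => (hF y hy.1).hasDerivWithinAt) x ⟨hx, le_rfl⟩

theorem AntitoneOn.deriv_nonpos_of_mem_nhds {g : ℝ → ℝ} {s : Set ℝ} {x : ℝ}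
    (hg : AntitoneOn g s) (hx : s ∈ nhds x) : deriv g x ≤ 0 := by
  rw [← derivWithin_of_mem_nhds hx]
  exact hg.derivWithin_nonpos

theorem hasDerivAt_div_eq_wronskian {f g : ℝ → ℝ} {x : ℝ} (hf : DifferentiableAt ℝ f x)
    (hg : DifferentiableAt ℝ g x) (hfx : f x ≠ 0) :
    HasDerivAt (fun y => g y / f y) (wronskian f g x / f x ^ 2) x := by
  refine (hg.hasDerivAt.div hf.hasDerivAt hfx).congr_deriv ?_
  simp only [wronskian]
  ring

theorem hasDerivAt_wronskian {f g : ℝ → ℝ} {a b x : ℝ}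
    (hf : DifferentiableAt ℝ f x) (hf' : DifferentiableAt ℝ (deriv f) x)
    (hg : DifferentiableAt ℝ g x) (hg' : DifferentiableAt ℝ (deriv g) x)
    (hf'' : deriv (deriv f) x = a * deriv f x + b * f x)
    (hg'' : deriv (deriv g) x = a * deriv g x + b * g x) :
    HasDerivAt (wronskian f g) (a * wronskian f g x) x := by
  refine ((hf.hasDerivAt.mul hg'.hasDerivAt).sub
    (hg.hasDerivAt.mul hf'.hasDerivAt)).congr_deriv ?_
  simp only [wronskian, hf'', hg'']
  ring

theorem hasDerivAt_exp_mul_sq_mul {F : ℝ → ℝ} {F' μ x : ℝ} (hF : HasDerivAt F F' x) :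
    HasDerivAt (fun t => exp (μ * t ^ 2) * F t)
      (exp (μ * x ^ 2) * (F' + 2 * μ * x * F x)) x := by
  have hsq : HasDerivAt (fun t => μ * t ^ 2) (2 * μ * x) x := by
    simpa [mul_comm, mul_left_comm] using (hasDerivAt_pow 2 x).const_mul μ
  refine (hsq.exp.mul hF).congr_deriv ?_
  ring

/-- Abel's identity for `w'' = -2μx w' + b(x) w` on `[0, ∞)`. -/
theorem wronskian_eq_mul_exp {f g b : ℝ → ℝ} {μ : ℝ}
    (hf : Differentiable ℝ f) (hf' : Differentiable ℝ (deriv f))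
    (hg : Differentiable ℝ g) (hg' : Differentiable ℝ (deriv g))
    (hf'' : ∀ x ≥ 0, deriv (deriv f) x = -(2 * μ * x) * deriv f x + b x * f x)
    (hg'' : ∀ x ≥ 0, deriv (deriv g) x = -(2 * μ * x) * deriv g x + b x * g x)
    {x : ℝ} (hx : 0 ≤ x) :
    wronskian f g x = wronskian f g 0 * exp (-(μ * x ^ 2)) := by
  have hconst : ∀ y ≥ 0, HasDerivAt (fun t => exp (μ * t ^ 2) * wronskian f g t) 0 y := by
    intro y hy
    refine (hasDerivAt_exp_mul_sq_mul (μ := μ) (hasDerivAt_wronskian (hf y) (hf' y) (hg y)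
      (hg' y) (hf'' y hy) (hg'' y hy))).congr_deriv ?_
    ring
  have hx_eq := eq_of_forall_hasDerivAt_zero hconst hx
  norm_num at hx_eq
  rw [exp_neg, ← hx_eq]
  field_simp

theorem le_of_gaussian_le_neg_deriv {f : ℝ → ℝ} {μ C : ℝ} (hμ : 0 ≤ μ) (hC : 0 ≤ C)
    (hf : Differentiable ℝ f) (hf_nonneg : ∀ x ≥ 0, 0 ≤ f x)
    (hdecay : ∀ t > 0, C * exp (-(μ * t ^ 2)) ≤ -deriv f t) {x : ℝ} (hx : 1 ≤ x) :
    C * exp (-(3 * μ)) * exp (-(μ * x ^ 2)) / x ≤ f x := by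
  have hx0 : 0 < x := by linarith
  set b := x + x⁻¹
  have hxb : x ≤ b := le_add_of_nonneg_right (inv_nonneg.mpr hx0.le)
  have hb_sq : b ^ 2 ≤ x ^ 2 + 3 := by
    have hinv : x⁻¹ ≤ 1 := inv_le_one_of_one_le₀ hx
    have : b ^ 2 = x ^ 2 + 2 + x⁻¹ ^ 2 := by simp only [b]; field_simp; ring
    nlinarith [inv_nonneg.mpr hx0.le]
  have hderiv : ∀ t ∈ interior (Icc x b),
      deriv f t ≤ -(C * exp (-(3 * μ)) * exp (-(μ * x ^ 2))) := by
    rw [interior_Icc]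
    rintro t ⟨hxt, htb⟩
    have ht_sq : t ^ 2 ≤ x ^ 2 + 3 := by nlinarith
    calc deriv f t ≤ -(C * exp (-(μ * t ^ 2))) := by linarith [hdecay t (by linarith)]
      _ ≤ -(C * exp (-(3 * μ)) * exp (-(μ * x ^ 2))) := by
        rw [mul_assoc, ← exp_add, neg_le_neg_iff]
        gcongr
        nlinarith
  have hdrop := (convex_Icc x b).image_sub_le_mul_sub_of_deriv_le hf.continuous.continuousOn
    hf.differentiableOn hderiv x ⟨le_rfl, hxb⟩ b ⟨hxb, le_rfl⟩ hxb
  have hbx : b - x = x⁻¹ := by simp [b]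
  rw [hbx] at hdrop
  rw [div_eq_mul_inv]
  linarith [hf_nonneg b (by linarith)]

theorem not_forall_gaussian_le_neg_deriv {f : ℝ → ℝ} {μ γ C : ℝ} (hμ : 0 ≤ μ) (hγ : 0 < γ)
    (hC : 0 < C) (hf : Differentiable ℝ f) (hf' : Differentiable ℝ (deriv f))
    (hf'' : ∀ x ≥ 0, deriv (deriv f) x = -(2 * μ * x) * deriv f x + 2 * γ * x * f x)
    (hf_nonneg : ∀ x ≥ 0, 0 ≤ f x) :
    ¬ ∀ t > 0, C * exp (-(μ * t ^ 2)) ≤ -deriv f t := by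
  intro hdecay
  set K := C * exp (-(3 * μ))
  have hK : 0 < K := by positivity
  set A := fun t => exp (μ * t ^ 2) * deriv f t
  have hA : ∀ t ≥ 0, HasDerivAt A (exp (μ * t ^ 2) * (2 * γ * t * f t)) t := by
    intro t ht
    refine (hasDerivAt_exp_mul_sq_mul (hf' t).hasDerivAt).congr_deriv ?_
    rw [hf'' t ht]
    ring
  -- `f x ≥ K e^{-μx²} / x` makes `A'` bounded below by a positive constant.
  have hA'_ge : ∀ t ∈ interior (Ici (1 : ℝ)), 2 * γ * K ≤ deriv A t := by
    rw [interior_Ici]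
    intro t (ht : 1 < t)
    have ht0 : 0 < t := by linarith
    have hft := le_of_gaussian_le_neg_deriv hμ hC.le hf hf_nonneg hdecay ht.le
    rw [(hA t ht0.le).deriv]
    calc 2 * γ * K = exp (μ * t ^ 2) * (2 * γ * t * (K * exp (-(μ * t ^ 2)) / t)) := by
          rw [exp_neg]; field_simp
      _ ≤ exp (μ * t ^ 2) * (2 * γ * t * f t) := by gcongr
  have hA_growth := (convex_Ici (1 : ℝ)).mul_sub_le_image_sub_of_le_deriv
    (fun t ht => (hA t (by linarith [mem_Ici.mp ht])).continuousAt.continuousWithinAt)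
    (fun t ht => (hA t (by linarith [mem_Ici.mp (interior_subset ht)])).differentiableAt
      |>.differentiableWithinAt) hA'_ge
  have hA_neg : ∀ t > 0, A t < 0 := fun t ht =>
    mul_neg_of_pos_of_neg (exp_pos _)
      (by linarith [hdecay t ht, mul_pos hC (exp_pos (-(μ * t ^ 2)))])
  set x := 1 + (1 - A 1) / (2 * γ * K)
  have hx : 1 ≤ x :=
    le_add_of_nonneg_right (div_nonneg (by linarith [hA_neg 1 one_pos]) (by positivity))
  have := hA_growth 1 (mem_Ici.mpr le_rfl) x hx hx
  have hx_sub : 2 * γ * K * (x - 1) = 1 - A 1 := by simp only [x]; field_simp; ring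
  linarith [hA_neg x (by linarith)]

theorem wronskian_zero_nonpos {f g : ℝ → ℝ} {μ γ : ℝ} (hμ : 0 ≤ μ) (hγ : 0 < γ)
    (hf : Differentiable ℝ f) (hf' : Differentiable ℝ (deriv f))
    (hf'' : ∀ x ≥ 0, deriv (deriv f) x = -(2 * μ * x) * deriv f x + 2 * γ * x * f x)
    (hf_nonneg : ∀ x ≥ 0, 0 ≤ f x) (hg_pos : ∀ x ≥ 0, 0 < g x)
    (hg_anti : AntitoneOn g (Ici 0))
    (hW : ∀ x ≥ 0, wronskian f g x = wronskian f g 0 * exp (-(μ * x ^ 2))) :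
    wronskian f g 0 ≤ 0 := by
  by_contra! hW0
  have hg0 := hg_pos 0 le_rfl
  refine not_forall_gaussian_le_neg_deriv hμ hγ (div_pos hW0 hg0) hf hf' hf'' hf_nonneg
    fun t ht => ?_
  have hg't : deriv g t ≤ 0 := hg_anti.deriv_nonpos_of_mem_nhds (Ici_mem_nhds ht)
  have hgt_le : g t ≤ g 0 := hg_anti self_mem_Ici ht.le ht.le
  have hWt : wronskian f g 0 * exp (-(μ * t ^ 2)) ≤ g t * -deriv f t := by
    rw [← hW t ht.le, wronskian]
    nlinarith [mul_nonpos_of_nonneg_of_nonpos (hf_nonneg t ht.le) hg't]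
  have hf't : 0 ≤ -deriv f t :=
    nonneg_of_mul_nonneg_right (hWt.trans' (by positivity)) (hg_pos t ht.le)
  rw [div_mul_eq_mul_div, div_le_iff₀ hg0]
  nlinarith [mul_le_mul_of_nonneg_right hgt_le hf't]

/-- Up to a positive constant factor there is at most one positive
non-increasing solution of `(1/2)w'' + μxw' − γxw = 0` on `[0,∞)`: if `f` and `g`
are two such solutions then `g = c·f` on `[0,∞)` for some `c > 0`. -/
theorem OU_positive_decreasing_solution_unique (μ γ : ℝ) (hμ : 0 < μ) (hγ : 0 < γ)
    (f g : ℝ → ℝ) (hf : ContDiff ℝ 2 f) (hg : ContDiff ℝ 2 g)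
    (hf_ode : ∀ x ≥ (0:ℝ),
      (1/2) * deriv (deriv f) x + μ * x * deriv f x - γ * x * f x = 0)
    (hg_ode : ∀ x ≥ (0:ℝ),
      (1/2) * deriv (deriv g) x + μ * x * deriv g x - γ * x * g x = 0)
    (hf_pos : ∀ x ≥ (0:ℝ), 0 < f x) (hg_pos : ∀ x ≥ (0:ℝ), 0 < g x)
    (hf_anti : AntitoneOn f (Set.Ici 0)) (hg_anti : AntitoneOn g (Set.Ici 0)) :
    ∃ c > (0:ℝ), ∀ x ≥ (0:ℝ), g x = c * f x := by
  have hf₁ := hf.differentiable (by norm_num)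
  have hg₁ := hg.differentiable (by norm_num)
  have hf₂ := hf.differentiable_deriv_two
  have hg₂ := hg.differentiable_deriv_two
  have hf'' : ∀ x ≥ 0, deriv (deriv f) x = -(2 * μ * x) * deriv f x + 2 * γ * x * f x :=
    fun x hx => by linarith [hf_ode x hx]
  have hg'' : ∀ x ≥ 0, deriv (deriv g) x = -(2 * μ * x) * deriv g x + 2 * γ * x * g x :=
    fun x hx => by linarith [hg_ode x hx]
  have hW_fg := wronskian_zero_nonpos hμ.le hγ hf₁ hf₂ hf'' (fun x hx => (hf_pos x hx).le)
    hg_pos hg_anti fun x => wronskian_eq_mul_exp hf₁ hf₂ hg₁ hg₂ hf'' hg''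
  have hW_gf := wronskian_zero_nonpos hμ.le hγ hg₁ hg₂ hg'' (fun x hx => (hg_pos x hx).le)
    hf_pos hf_anti fun x => wronskian_eq_mul_exp hg₁ hg₂ hf₁ hf₂ hg'' hf''
  have hW0 : wronskian f g 0 = 0 := by
    simp only [wronskian] at hW_fg hW_gf ⊢
    linarith
  have hratio : ∀ x ≥ 0, HasDerivAt (fun y => g y / f y) 0 x := fun x hx => by
    simpa [wronskian_eq_mul_exp hf₁ hf₂ hg₁ hg₂ hf'' hg'' hx, hW0] using
      hasDerivAt_div_eq_wronskian (hf₁ x) (hg₁ x) (hf_pos x hx).ne'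
  refine ⟨g 0 / f 0, div_pos (hg_pos 0 le_rfl) (hf_pos 0 le_rfl), fun x hx => ?_⟩
  rw [← eq_of_forall_hasDerivAt_zero hratio hx, div_mul_cancel₀ _ (hf_pos x hx).ne']
end

section
/- Let f, φ, ψ, Φ, Ψ : [0,∞) → [0,∞) be continuous nonnegative functions such that f is continuously differentiable, f(x) → 0 as x → ∞, the integral ∫_z^∞ f(x)·φ(x) dx is finite for every z ≥ 0, and f'(z) = −( Ψ(z)·∫_z^∞ f(x)·φ(x) dx + Φ(z)·∫₀^z f(x)·ψ(x) dx ) for all z ≥ 0. Then ∫₀^∞ f(x)·( φ(x)·∫₀ˣ Ψ(y) dy + ψ(x)·∫ₓ^∞ Φ(y) dy ) dx = f(0). -/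
/-!
Write `A z = ∫_z^∞ f φ` and `B z = ∫_0^z f ψ`, so that `-f' = Ψ A + Φ B ≥ 0`. Integrating
over `(0, ∞)` gives `f 0 = ∫_0^∞ (Ψ A + Φ B)`, and Tonelli on the region `0 < y ≤ x` turns
`∫ Ψ(z) ∫_z^∞ fφ` into `∫ f(x) φ(x) ∫_0^x Ψ` and `∫ Φ(z) ∫_0^z fψ` into `∫ f(x) ψ(x) ∫_x^∞ Φ`.
The computation is carried out in `ℝ≥0∞`, where Tonelli needs no integrability. Finiteness of
the total `f 0` then shows that for almost every `x` either `f x * ψ x = 0` or `Φ` is integrable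
on `(x, ∞)`, so the junk value `0` of a divergent `∫_x^∞ Φ` never matters.
-/

open Real Filter Set MeasureTheory

open scoped ENNReal Topology

theorem setLIntegral_Ioi_ofReal_neg_of_hasDerivAt_of_nonpos {f f' : ℝ → ℝ} {a l : ℝ}
    (hcont : ContinuousWithinAt f (Ici a) a) (hderiv : ∀ x ∈ Ioi a, HasDerivAt f (f' x) x)
    (hf' : ∀ x ∈ Ioi a, f' x ≤ 0) (hf : Tendsto f atTop (𝓝 l)) :
    ∫⁻ x in Ioi a, ENNReal.ofReal (-f' x) = ENNReal.ofReal (f a - l) := by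
  have hderiv' : ∀ x ∈ Ioi a, HasDerivAt (fun y => -f y) (-f' x) x :=
    fun x hx => (hderiv x hx).neg
  have hf'' : ∀ x ∈ Ioi a, 0 ≤ -f' x := fun x hx => neg_nonneg.2 (hf' x hx)
  rw [← ofReal_integral_eq_lintegral_ofReal
      (integrableOn_Ioi_deriv_of_nonneg hcont.neg hderiv' hf'' hf.neg)
      (ae_restrict_of_forall_mem measurableSet_Ioi hf''),
    integral_Ioi_of_hasDerivAt_of_nonneg hcont.neg hderiv' hf'' hf.neg, Pi.neg_apply,
    neg_sub_neg]

section

variable {α : Type*} [LinearOrder α] [TopologicalSpace α] [OrderClosedTopology α]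
  [MeasurableSpace α] [BorelSpace α] {μ : Measure α}

theorem measurable_setLIntegral_Ioi (g : α → ℝ≥0∞) :
    Measurable fun z => ∫⁻ x in Ioi z, g x ∂μ :=
  Antitone.measurable fun _ _ hzw => lintegral_mono_set (Ioi_subset_Ioi hzw)

theorem measurable_setLIntegral_Ioc (a : α) (g : α → ℝ≥0∞) :
    Measurable fun z => ∫⁻ x in Ioc a z, g x ∂μ :=
  Monotone.measurable fun _ _ hzw => lintegral_mono_set (Ioc_subset_Ioc_right hzw)

end

section

variable {μ : Measure ℝ} [SFinite μ] [NullSingletonClass μ]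

/-- Both sides are the integral of `g x * h y` over `a < y ≤ x`. -/
theorem setLIntegral_mul_setLIntegral_Ioc_comm (a : ℝ) {g h : ℝ → ℝ≥0∞}
    (hg : AEMeasurable g (μ.restrict (Ioi a))) (hh : AEMeasurable h (μ.restrict (Ioi a))) :
    ∫⁻ x in Ioi a, g x * ∫⁻ y in Ioc a x, h y ∂μ ∂μ
      = ∫⁻ y in Ioi a, h y * ∫⁻ x in Ioi y, g x ∂μ ∂μ := by
  let F : ℝ → ℝ → ℝ≥0∞ := fun x y =>
    {p : ℝ × ℝ | p.2 ≤ p.1}.indicator (fun p => g p.1 * h p.2) (x, y)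
  have hF : AEMeasurable (Function.uncurry F) ((μ.restrict (Ioi a)).prod (μ.restrict (Ioi a))) :=
    (hg.comp_fst.mul hh.comp_snd).indicator (measurableSet_le measurable_snd measurable_fst)
  have hleft : ∀ x ∈ Ioi a, g x * ∫⁻ y in Ioc a x, h y ∂μ = ∫⁻ y in Ioi a, F x y ∂μ := by
    intro x _
    have hFx : F x = (Iic x).indicator (fun y => g x * h y) := by
      ext y; simp [F, indicator]
    rw [hFx, lintegral_indicator measurableSet_Iic, Measure.restrict_restrict measurableSet_Iic,
      Iic_inter_Ioi, lintegral_const_mul'' _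
        (hh.mono_measure (Measure.restrict_mono Ioc_subset_Ioi_self le_rfl))]
  have hright : ∀ y ∈ Ioi a, h y * ∫⁻ x in Ioi y, g x ∂μ = ∫⁻ x in Ioi a, F x y ∂μ := by
    intro y hy
    have hFy : (fun x => F x y) = (Ici y).indicator (fun x => h y * g x) := by
      ext x; simp [F, indicator, mul_comm]
    rw [hFy, lintegral_indicator measurableSet_Ici, Measure.restrict_restrict measurableSet_Ici,
      inter_eq_left.2 (Ici_subset_Ioi.2 hy), setLIntegral_congr Ioi_ae_eq_Ici.symm,
      lintegral_const_mul'' _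
        (hg.mono_measure (Measure.restrict_mono (Ioi_subset_Ioi hy.le) le_rfl))]
  rw [setLIntegral_congr_fun measurableSet_Ioi hleft,
    setLIntegral_congr_fun measurableSet_Ioi hright]
  exact lintegral_lintegral_swap hF

theorem setLIntegral_mul_Ioc_add_mul_Ioi_comm (a : ℝ) {p q Φ Ψ : ℝ → ℝ≥0∞}
    (hp : AEMeasurable p (μ.restrict (Ioi a))) (hq : AEMeasurable q (μ.restrict (Ioi a)))
    (hΦ : AEMeasurable Φ (μ.restrict (Ioi a))) (hΨ : AEMeasurable Ψ (μ.restrict (Ioi a))) :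
    ∫⁻ x in Ioi a, (p x * (∫⁻ y in Ioc a x, Ψ y ∂μ) + q x * ∫⁻ y in Ioi x, Φ y ∂μ) ∂μ
      = ∫⁻ z in Ioi a, (Ψ z * (∫⁻ x in Ioi z, p x ∂μ) + Φ z * ∫⁻ x in Ioc a z, q x ∂μ) ∂μ := by
  rw [lintegral_add_left' (hp.fun_mul (measurable_setLIntegral_Ioc a Ψ).aemeasurable),
    lintegral_add_left' (hΨ.fun_mul (measurable_setLIntegral_Ioi p).aemeasurable),
    setLIntegral_mul_setLIntegral_Ioc_comm a hp hΨ, setLIntegral_mul_setLIntegral_Ioc_comm a hΦ hq]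

end

section

variable {α : Type*} [MeasurableSpace α] {μ : Measure α}

theorem ofReal_mul_setIntegral_of_nonneg {s : Set α} {g : α → ℝ} {c : ℝ} (hc : 0 ≤ c)
    (hs : MeasurableSet s) (hg : IntegrableOn g s μ) (hg0 : ∀ x ∈ s, 0 ≤ g x) :
    ENNReal.ofReal (c * ∫ x in s, g x ∂μ)
      = ENNReal.ofReal c * ∫⁻ x in s, ENNReal.ofReal (g x) ∂μ := by
  rw [ENNReal.ofReal_mul hc,
    ofReal_integral_eq_lintegral_ofReal hg (ae_restrict_of_forall_mem hs hg0)]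

/-- No finiteness is needed: both sides are `c * 0` when `∫⁻ ofReal g = ∞`. -/
theorem toReal_ofReal_mul_setLIntegral_of_nonneg {s : Set α} {g : α → ℝ} {c : ℝ} (hc : 0 ≤ c)
    (hs : MeasurableSet s) (hg : AEStronglyMeasurable g (μ.restrict s))
    (hg0 : ∀ x ∈ s, 0 ≤ g x) :
    (ENNReal.ofReal c * ∫⁻ x in s, ENNReal.ofReal (g x) ∂μ).toReal = c * ∫ x in s, g x ∂μ := by
  rw [ENNReal.toReal_mul, ENNReal.toReal_ofReal hc,
    integral_eq_lintegral_of_nonneg_ae (ae_restrict_of_forall_mem hs hg0) hg]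

theorem integral_eq_toReal_lintegral_of_ae {F : α → ℝ} {G : α → ℝ≥0∞} (hG : AEMeasurable G μ)
    (hG_fin : ∫⁻ x, G x ∂μ ≠ ∞) (hFG : ∀ᵐ x ∂μ, G x ≠ ∞ → F x = (G x).toReal) :
    ∫ x, F x ∂μ = (∫⁻ x, G x ∂μ).toReal := by
  have hG_lt := ae_lt_top' hG hG_fin
  rw [← integral_toReal hG hG_lt]
  exact integral_congr_ae (hG_lt.mp (hFG.mono fun x hx hx_lt => hx hx_lt.ne))

end

theorem ofReal_mul_setIntegral_Ioi_add_mul_intervalIntegral {p q : ℝ → ℝ} {a z c d : ℝ}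
    (hz : a ≤ z) (hc : 0 ≤ c) (hd : 0 ≤ d) (hp : IntegrableOn p (Ioi z))
    (hq : IntegrableOn q (Ioc a z)) (hp0 : ∀ x ∈ Ioi z, 0 ≤ p x) (hq0 : ∀ x ∈ Ioc a z, 0 ≤ q x) :
    ENNReal.ofReal (c * (∫ x in Ioi z, p x) + d * ∫ x in a..z, q x)
      = ENNReal.ofReal c * (∫⁻ x in Ioi z, ENNReal.ofReal (p x))
        + ENNReal.ofReal d * ∫⁻ x in Ioc a z, ENNReal.ofReal (q x) := by
  rw [intervalIntegral.integral_of_le hz,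
    ENNReal.ofReal_add (mul_nonneg hc (setIntegral_nonneg measurableSet_Ioi hp0))
      (mul_nonneg hd (setIntegral_nonneg measurableSet_Ioc hq0)),
    ofReal_mul_setIntegral_of_nonneg hc measurableSet_Ioi hp hp0,
    ofReal_mul_setIntegral_of_nonneg hd measurableSet_Ioc hq hq0]

theorem toReal_mul_setLIntegral_Ioc_add_mul_setLIntegral_Ioi {Φ Ψ : ℝ → ℝ} {a x c d : ℝ}
    (hx : a ≤ x) (hc : 0 ≤ c) (hd : 0 ≤ d) (hΨ : AEStronglyMeasurable Ψ (volume.restrict (Ioc a x)))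
    (hΦ : AEStronglyMeasurable Φ (volume.restrict (Ioi x))) (hΨ0 : ∀ y ∈ Ioc a x, 0 ≤ Ψ y)
    (hΦ0 : ∀ y ∈ Ioi x, 0 ≤ Φ y)
    (h_fin : ENNReal.ofReal c * (∫⁻ y in Ioc a x, ENNReal.ofReal (Ψ y))
      + ENNReal.ofReal d * ∫⁻ y in Ioi x, ENNReal.ofReal (Φ y) ≠ ∞) :
    (ENNReal.ofReal c * (∫⁻ y in Ioc a x, ENNReal.ofReal (Ψ y))
      + ENNReal.ofReal d * ∫⁻ y in Ioi x, ENNReal.ofReal (Φ y)).toReal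
      = c * (∫ y in a..x, Ψ y) + d * ∫ y in Ioi x, Φ y := by
  obtain ⟨hΨ_fin, hΦ_fin⟩ := ENNReal.add_ne_top.1 h_fin
  rw [ENNReal.toReal_add hΨ_fin hΦ_fin,
    toReal_ofReal_mul_setLIntegral_of_nonneg hc measurableSet_Ioc hΨ hΨ0,
    toReal_ofReal_mul_setLIntegral_of_nonneg hd measurableSet_Ioi hΦ hΦ0,
    intervalIntegral.integral_of_le hx]

theorem invariant_mean_jump_time_general (f φ ψ Φ Ψ : ℝ → ℝ)
    (hφ_cont : ContinuousOn φ (Set.Ici 0))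
    (hψ_cont : ContinuousOn ψ (Set.Ici 0)) (hΦ_cont : ContinuousOn Φ (Set.Ici 0))
    (hΨ_cont : ContinuousOn Ψ (Set.Ici 0))
    (hf_nonneg : ∀ x ≥ (0:ℝ), 0 ≤ f x) (hφ_nonneg : ∀ x ≥ (0:ℝ), 0 ≤ φ x)
    (hψ_nonneg : ∀ x ≥ (0:ℝ), 0 ≤ ψ x) (hΦ_nonneg : ∀ x ≥ (0:ℝ), 0 ≤ Φ x)
    (hΨ_nonneg : ∀ x ≥ (0:ℝ), 0 ≤ Ψ x)
    (hf : ContDiff ℝ 1 f)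
    (hf_lim : Tendsto f atTop (nhds 0))
    (hfφ_int : ∀ z ≥ (0:ℝ), IntegrableOn (fun x => f x * φ x) (Set.Ioi z))
    (hf' : ∀ z ≥ (0:ℝ), deriv f z =
      -(Ψ z * (∫ x in Set.Ioi z, f x * φ x) + Φ z * (∫ x in (0:ℝ)..z, f x * ψ x))) :
    ∫ x in Set.Ioi (0:ℝ),
        f x * (φ x * (∫ y in (0:ℝ)..x, Ψ y) + ψ x * (∫ y in Set.Ioi x, Φ y))
      = f 0 := by
  have hfφ : ContinuousOn (fun x => f x * φ x) (Ici 0) := hf.continuous.continuousOn.mul hφ_cont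
  have hfψ : ContinuousOn (fun x => f x * ψ x) (Ici 0) := hf.continuous.continuousOn.mul hψ_cont
  have hfφ0 : ∀ x ≥ (0:ℝ), 0 ≤ f x * φ x := fun x hx => mul_nonneg (hf_nonneg x hx) (hφ_nonneg x hx)
  have hfψ0 : ∀ x ≥ (0:ℝ), 0 ≤ f x * ψ x := fun x hx => mul_nonneg (hf_nonneg x hx) (hψ_nonneg x hx)
  have haem : ∀ {g : ℝ → ℝ}, ContinuousOn g (Ici 0) →
      AEMeasurable (fun x => ENNReal.ofReal (g x)) (volume.restrict (Ioi 0)) :=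
    fun hg => ((hg.mono Ioi_subset_Ici_self).aemeasurable measurableSet_Ioi).ennreal_ofReal
  have hf'_nonpos : ∀ z ∈ Ioi (0:ℝ), deriv f z ≤ 0 := fun z hz => by
    rw [hf' z hz.le, neg_nonpos]
    exact add_nonneg (mul_nonneg (hΨ_nonneg z hz.le) (setIntegral_nonneg measurableSet_Ioi
        fun x hx => hfφ0 x (hz.le.trans hx.le)))
      (mul_nonneg (hΦ_nonneg z hz.le) (intervalIntegral.integral_nonneg hz.le
        fun x hx => hfψ0 x hx.1))
  have hrate : ∀ z ∈ Ioi (0:ℝ), ENNReal.ofReal (-deriv f z)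
      = ENNReal.ofReal (Ψ z) * (∫⁻ x in Ioi z, ENNReal.ofReal (f x * φ x))
        + ENNReal.ofReal (Φ z) * ∫⁻ x in Ioc 0 z, ENNReal.ofReal (f x * ψ x) := by
    intro z hz
    rw [hf' z hz.le, neg_neg]
    exact ofReal_mul_setIntegral_Ioi_add_mul_intervalIntegral hz.le (hΨ_nonneg z hz.le)
      (hΦ_nonneg z hz.le) (hfφ_int z hz.le)
      ((hfψ.mono Icc_subset_Ici_self).integrableOn_Icc.mono_set Ioc_subset_Icc_self)
      (fun x hx => hfφ0 x (hz.le.trans hx.le)) fun x hx => hfψ0 x hx.1.le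
  have hG : ∫⁻ x in Ioi 0, (ENNReal.ofReal (f x * φ x) * (∫⁻ y in Ioc 0 x, ENNReal.ofReal (Ψ y))
      + ENNReal.ofReal (f x * ψ x) * ∫⁻ y in Ioi x, ENNReal.ofReal (Φ y))
        = ENNReal.ofReal (f 0) := by
    rw [setLIntegral_mul_Ioc_add_mul_Ioi_comm 0 (haem hfφ) (haem hfψ) (haem hΦ_cont) (haem hΨ_cont),
      ← setLIntegral_congr_fun measurableSet_Ioi hrate,
      setLIntegral_Ioi_ofReal_neg_of_hasDerivAt_of_nonpos hf.continuous.continuousWithinAt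
        (fun x _ => ((hf.differentiable one_ne_zero) x).hasDerivAt) hf'_nonpos hf_lim, sub_zero]
  rw [integral_eq_toReal_lintegral_of_ae
      (((haem hfφ).fun_mul (measurable_setLIntegral_Ioc 0 _).aemeasurable).fun_add
        ((haem hfψ).fun_mul (measurable_setLIntegral_Ioi _).aemeasurable))
      (hG ▸ ENNReal.ofReal_ne_top) ?_, hG, ENNReal.toReal_ofReal (hf_nonneg 0 le_rfl)]
  filter_upwards [ae_restrict_mem measurableSet_Ioi] with x hx hx_fin
  have hx0 : (0:ℝ) ≤ x := hx.le
  rw [toReal_mul_setLIntegral_Ioc_add_mul_setLIntegral_Ioi hx0 (hfφ0 x hx0) (hfψ0 x hx0)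
    ((hΨ_cont.mono fun y hy => hy.1.le).aestronglyMeasurable measurableSet_Ioc)
    ((hΦ_cont.mono fun y hy => hx0.trans hy.le).aestronglyMeasurable measurableSet_Ioi)
    (fun y hy => hΨ_nonneg y hy.1.le) (fun y hy => hΦ_nonneg y (hx0.trans hy.le))
    hx_fin]
  ring

/-- Fubini identity for the mean time between jumps under the invariant
distribution of the Brownian ratchet: if `f, φ, ψ, Φ, Ψ` are continuous and nonnegative
on `[0,∞)`, `f` is continuously differentiable with `f(x) → 0` at infinity,
`∫_z^∞ f·φ < ∞` for every `z ≥ 0`, and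
`f'(z) = −(Ψ(z)∫_z^∞ f·φ + Φ(z)∫₀^z f·ψ)` for all `z ≥ 0`, then
`∫₀^∞ f(x)·(φ(x)∫₀ˣΨ + ψ(x)∫ₓ^∞Φ) dx = f(0)`. -/
theorem invariant_mean_jump_time (f φ ψ Φ Ψ : ℝ → ℝ)
    (hf_cont : ContinuousOn f (Set.Ici 0)) (hφ_cont : ContinuousOn φ (Set.Ici 0))
    (hψ_cont : ContinuousOn ψ (Set.Ici 0)) (hΦ_cont : ContinuousOn Φ (Set.Ici 0))
    (hΨ_cont : ContinuousOn Ψ (Set.Ici 0))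
    (hf_nonneg : ∀ x ≥ (0:ℝ), 0 ≤ f x) (hφ_nonneg : ∀ x ≥ (0:ℝ), 0 ≤ φ x)
    (hψ_nonneg : ∀ x ≥ (0:ℝ), 0 ≤ ψ x) (hΦ_nonneg : ∀ x ≥ (0:ℝ), 0 ≤ Φ x)
    (hΨ_nonneg : ∀ x ≥ (0:ℝ), 0 ≤ Ψ x)
    (hf : ContDiff ℝ 1 f)
    (hf_lim : Tendsto f atTop (nhds 0))
    (hfφ_int : ∀ z ≥ (0:ℝ), IntegrableOn (fun x => f x * φ x) (Set.Ioi z))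
    (hf' : ∀ z ≥ (0:ℝ), deriv f z =
      -(Ψ z * (∫ x in Set.Ioi z, f x * φ x) + Φ z * (∫ x in (0:ℝ)..z, f x * ψ x))) :
    ∫ x in Set.Ioi (0:ℝ),
        f x * (φ x * (∫ y in (0:ℝ)..x, Ψ y) + ψ x * (∫ y in Set.Ioi x, Φ y))
      = f 0 :=
  invariant_mean_jump_time_general f φ ψ Φ Ψ hφ_cont hψ_cont hΦ_cont hΨ_cont hf_nonneg hφ_nonneg
    hψ_nonneg hΦ_nonneg hΨ_nonneg hf hf_lim hfφ_int hf'
end
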